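/- arXiv:0908.4586 — 7 statements merged into one kernel-verified Lean document; each statement's English description precedes it below -/
import Mathlib

section
/- Let r > 0 be a real number such that the set S = { z ∈ ℤ² \ {0} : ‖z‖₂ < r } is nonempty. Then card{ z ∈ ℤ² \ {0} : ‖z‖₂ ≤ r } ≤ 2 · card S. -/
/-! Send each lattice point of the circle `‖z‖² = n` one unit step towards the origin, along the
axis determined by which of the four half-open quadrants it lies in. The step lowers `‖z‖²`, and
for `n ≥ 2` it never hits `0` and is injective on the circle, so the circle has at most as many
points as the punctured open disc. Since the open disc has a nonzero point, `n ≥ 2` holds, and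
the closed disc is the open disc together with the circle. -/

def latticeNormSq (z : ℤ × ℤ) : ℤ := z.1 ^ 2 + z.2 ^ 2

lemma one_le_latticeNormSq {z : ℤ × ℤ} (hz : z ≠ 0) : 1 ≤ latticeNormSq z := by
  obtain ⟨a, b⟩ := z
  have hab : a ≠ 0 ∨ b ≠ 0 := by simpa [Prod.ext_iff, ← not_and_or] using hz
  unfold latticeNormSq
  rcases hab with h | h <;> nlinarith [sq_pos_of_ne_zero h, sq_nonneg a, sq_nonneg b]

lemma finite_setOf_latticeNormSq_le (M : ℝ) :
    {z : ℤ × ℤ | (latticeNormSq z : ℝ) ≤ M}.Finite := by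
  refine (Set.finite_Icc (-⌊M⌋, -⌊M⌋) (⌊M⌋, ⌊M⌋)).subset fun z hz => ?_
  obtain ⟨a, b⟩ := z
  have hM : a ^ 2 + b ^ 2 ≤ ⌊M⌋ := Int.le_floor.mpr (by simpa [latticeNormSq] using hz)
  simp only [Set.mem_Icc, Prod.mk_le_mk]
  constructor <;> constructor <;>
    nlinarith [Int.le_self_sq a, Int.le_self_sq (-a), Int.le_self_sq b, Int.le_self_sq (-b),
      sq_nonneg a, sq_nonneg b]

def stepToOrigin (z : ℤ × ℤ) : ℤ × ℤ :=
  if 0 < z.1 ∧ 0 ≤ z.2 then (z.1 - 1, z.2)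
  else if z.1 ≤ 0 ∧ 0 < z.2 then (z.1, z.2 - 1)
  else if z.1 < 0 ∧ z.2 ≤ 0 then (z.1 + 1, z.2)
  else (z.1, z.2 + 1)

lemma latticeNormSq_stepToOrigin_lt {z : ℤ × ℤ} (hz : z ≠ 0) :
    latticeNormSq (stepToOrigin z) < latticeNormSq z := by
  obtain ⟨a, b⟩ := z
  have hab : a ≠ 0 ∨ b ≠ 0 := by simpa [Prod.ext_iff, ← not_and_or] using hz
  unfold stepToOrigin latticeNormSq
  split_ifs <;> dsimp only <;> grind

lemma stepToOrigin_ne_zero {z : ℤ × ℤ} (hz : 2 ≤ latticeNormSq z) : stepToOrigin z ≠ 0 := by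
  obtain ⟨a, b⟩ := z
  unfold stepToOrigin latticeNormSq at *
  split_ifs <;> simp only [ne_eq, Prod.ext_iff, Prod.fst_zero, Prod.snd_zero] <;> grind

lemma eq_of_stepToOrigin_eq {z w : ℤ × ℤ} (hz : 2 ≤ latticeNormSq z)
    (hzw : latticeNormSq z = latticeNormSq w) (h : stepToOrigin z = stepToOrigin w) : z = w := by
  obtain ⟨a, b⟩ := z
  obtain ⟨c, d⟩ := w
  unfold stepToOrigin latticeNormSq at *
  split_ifs at h <;> obtain ⟨h₁, h₂⟩ := Prod.mk.inj h <;> subst_vars <;> grind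

lemma ncard_circle_le_ncard_punctured_disc {s : ℝ} (hs : 1 < s) :
    {z : ℤ × ℤ | (latticeNormSq z : ℝ) = s}.ncard ≤
      {z : ℤ × ℤ | z ≠ 0 ∧ (latticeNormSq z : ℝ) < s}.ncard := by
  have two_le : ∀ z ∈ {z : ℤ × ℤ | (latticeNormSq z : ℝ) = s}, 2 ≤ latticeNormSq z := by
    intro z hz
    have : (1 : ℝ) < latticeNormSq z := hz ▸ hs
    have : 1 < latticeNormSq z := by exact_mod_cast this
    omega
  refine Set.ncard_le_ncard_of_injOn stepToOrigin
    (fun z hz => ⟨stepToOrigin_ne_zero (two_le z hz), ?_⟩)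
    (fun z hz w hw h => eq_of_stepToOrigin_eq (two_le z hz) (by exact_mod_cast hz.trans hw.symm) h)
    ((finite_setOf_latticeNormSq_le s).subset fun z hz => hz.2.le)
  have hz0 : z ≠ 0 := by rintro rfl; simp [latticeNormSq] at hz; linarith
  calc (latticeNormSq (stepToOrigin z) : ℝ) < latticeNormSq z := by
        exact_mod_cast latticeNormSq_stepToOrigin_lt hz0
    _ = s := hz

theorem ncard_punctured_closedDisc_le_two_mul {s : ℝ} (hs : 1 < s) :
    {z : ℤ × ℤ | z ≠ 0 ∧ (latticeNormSq z : ℝ) ≤ s}.ncard ≤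
      2 * {z : ℤ × ℤ | z ≠ 0 ∧ (latticeNormSq z : ℝ) < s}.ncard := by
  set disc := {z : ℤ × ℤ | z ≠ 0 ∧ (latticeNormSq z : ℝ) < s}
  set circle := {z : ℤ × ℤ | (latticeNormSq z : ℝ) = s}
  have hsplit : {z : ℤ × ℤ | z ≠ 0 ∧ (latticeNormSq z : ℝ) ≤ s} ⊆ disc ∪ circle :=
    fun z ⟨hz0, hzs⟩ => hzs.lt_or_eq.imp (⟨hz0, ·⟩) id
  have hfin : (disc ∪ circle).Finite :=
    (finite_setOf_latticeNormSq_le s).subset <|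
      Set.union_subset (fun z hz => hz.2.le) fun z hz => hz.le
  calc _ ≤ (disc ∪ circle).ncard := Set.ncard_le_ncard hsplit hfin
    _ ≤ disc.ncard + circle.ncard := Set.ncard_union_le _ _
    _ ≤ disc.ncard + disc.ncard := Nat.add_le_add_left (ncard_circle_le_ncard_punctured_disc hs) _
    _ = 2 * disc.ncard := (two_mul _).symm

theorem stmt_11_general (r : ℝ)
    (hne : {z : ℤ × ℤ | z ≠ 0 ∧ Real.sqrt ((z.1 : ℝ) ^ 2 + (z.2 : ℝ) ^ 2) < r}.Nonempty) :
    Set.ncard {z : ℤ × ℤ | z ≠ 0 ∧ Real.sqrt ((z.1 : ℝ) ^ 2 + (z.2 : ℝ) ^ 2) ≤ r}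
      ≤ 2 * Set.ncard {z : ℤ × ℤ | z ≠ 0 ∧ Real.sqrt ((z.1 : ℝ) ^ 2 + (z.2 : ℝ) ^ 2) < r} := by
  have hcast (z : ℤ × ℤ) : (z.1 : ℝ) ^ 2 + (z.2 : ℝ) ^ 2 = (latticeNormSq z : ℝ) := by
    push_cast [latticeNormSq]; rfl
  obtain ⟨z, hz0, hzr⟩ := hne
  have hr : 0 < r := (Real.sqrt_nonneg _).trans_lt hzr
  simp only [hcast, Real.sqrt_lt' hr, Real.sqrt_le_left hr.le] at hzr ⊢
  refine ncard_punctured_closedDisc_le_two_mul ?_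
  calc (1 : ℝ) ≤ latticeNormSq z := by exact_mod_cast one_le_latticeNormSq hz0
    _ < r ^ 2 := hzr

/-- If the punctured open disc of radius `r` contains a nonzero lattice point, then the
punctured closed disc of radius `r` contains at most twice as many lattice points as the
punctured open disc. -/
theorem stmt_11 (r : ℝ) (hr : 0 < r)
    (hne : {z : ℤ × ℤ | z ≠ 0 ∧ Real.sqrt ((z.1 : ℝ) ^ 2 + (z.2 : ℝ) ^ 2) < r}.Nonempty) :
    Set.ncard {z : ℤ × ℤ | z ≠ 0 ∧ Real.sqrt ((z.1 : ℝ) ^ 2 + (z.2 : ℝ) ^ 2) ≤ r}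
      ≤ 2 * Set.ncard {z : ℤ × ℤ | z ≠ 0 ∧ Real.sqrt ((z.1 : ℝ) ^ 2 + (z.2 : ℝ) ^ 2) < r} :=
  stmt_11_general r hne
end

section
/- Let p and d be positive integers, let r > 0, and let θ : (ℤ/pℤ)² → ℝ satisfy: θ(0) = 0; θ(−x) = θ(x) for all x; θ(x) ≠ 0 for at most 2d values of x; |θ(x)| ≤ r for all x; and Σ_x |θ(x)| ≤ 1/2. Then the matrix I − C(θ) is invertible and (1/p²) · tr[ (I − C(θ))⁻¹ ] ≤ 1 + 16·d·r². -/
/-!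
Write `C = C(θ)` and `M = (I - C)⁻¹`. For the `ℓ^∞` operator norm, `‖C‖ = ∑ₓ |θ(x)| ≤ 1/2`, so
`I - C` is invertible and `M = I + C M` gives `‖M‖ ≤ 2`. Iterating, `M = I + C + C (C M)`; the
first two terms contribute `p²` and `p² θ(0) = 0` to the trace, and since every entry of `C` is
at most `r`, `|tr (C (C M))| ≤ r p² ‖C M‖ ≤ 2 r p² ∑ₓ |θ(x)| ≤ 4 d r² p²`.
-/

/-- For `θ : (ℤ/pℤ)² → ℝ`, `C(θ)` is the `p² × p²` matrix indexed by `(ℤ/pℤ)² × (ℤ/pℤ)²`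
with entries `C(θ)(a,b) = θ(b - a)`. -/
def Cmat (p : ℕ) (θ : ZMod p × ZMod p → ℝ) :
    Matrix (ZMod p × ZMod p) (ZMod p × ZMod p) ℝ :=
  Matrix.of fun a b => θ (b - a)

open Finset

theorem norm_le_of_one_sub_mul_eq_one {R : Type*} [SeminormedRing R] {c m : R}
    (h : (1 - c) * m = 1) (hc : ‖c‖ < 1) : ‖m‖ ≤ ‖(1 : R)‖ / (1 - ‖c‖) := by
  have hm : m = 1 + c * m := by rw [← h]; noncomm_ring
  have : ‖m‖ ≤ ‖(1 : R)‖ + ‖c‖ * ‖m‖ :=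
    calc ‖m‖ = ‖1 + c * m‖ := congrArg _ hm
      _ ≤ ‖(1 : R)‖ + ‖c * m‖ := norm_add_le _ _
      _ ≤ ‖(1 : R)‖ + ‖c‖ * ‖m‖ := by gcongr; exact norm_mul_le _ _
  rw [le_div_iff₀ (by linarith)]
  linarith

theorem Finset.sum_abs_le_of_ncard_support_le {α : Type*} [Fintype α] {f : α → ℝ} {k : ℕ}
    {r : ℝ} (hr : 0 ≤ r) (hsupp : {x | f x ≠ 0}.ncard ≤ k) (hbound : ∀ x, |f x| ≤ r) :
    ∑ x, |f x| ≤ k * r := by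
  classical
  set s := (Function.support f).toFinset
  calc ∑ x, |f x| = ∑ x ∈ s, |f x| :=
        (sum_subset (subset_univ _) fun x _ hx => by simp_all [s]).symm
    _ ≤ #s • r := sum_le_card_nsmul _ _ r fun x _ => hbound x
    _ ≤ k * r := by
        rw [nsmul_eq_mul]
        gcongr
        rw [← Set.ncard_eq_toFinset_card']
        exact_mod_cast hsupp

namespace Matrix

attribute [local instance] Matrix.linftyOpSeminormedAddCommGroup Matrix.linftyOpNormedRing
  Matrix.linftyOpNormedAlgebra

variable {m n : Type*} [Fintype m] [Fintype n]

theorem sum_norm_row_le_linfty_opNorm {α : Type*} [SeminormedAddCommGroup α]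
    (A : Matrix m n α) (i : m) : ∑ j, ‖A i j‖ ≤ ‖A‖ := by
  have := le_sup (f := fun i => ∑ j, ‖A i j‖₊) (mem_univ i)
  rw [← linfty_opNNNorm_def, ← NNReal.coe_le_coe] at this
  simpa using this

theorem linfty_opNorm_one_le [DecidableEq n] : ‖(1 : Matrix n n ℝ)‖ ≤ 1 := by
  rw [← diagonal_one, linfty_opNorm_diagonal]
  exact (pi_norm_const_le (1 : ℝ)).trans_eq norm_one

theorem abs_trace_mul_le {A : Matrix n m ℝ} {r : ℝ} (hr : 0 ≤ r) (hA : ∀ i j, |A i j| ≤ r)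
    (B : Matrix m n ℝ) : |trace (A * B)| ≤ r * Fintype.card m * ‖B‖ := by
  calc |trace (A * B)| = |∑ i, ∑ j, A i j * B j i| := rfl
    _ ≤ ∑ i, ∑ j, r * |B j i| := by
        refine (abs_sum_le_sum_abs _ _).trans (sum_le_sum fun i _ => ?_)
        refine (abs_sum_le_sum_abs _ _).trans (sum_le_sum fun j _ => ?_)
        rw [abs_mul]
        exact mul_le_mul_of_nonneg_right (hA i j) (abs_nonneg _)
    _ = r * ∑ j, ∑ i, ‖B j i‖ := by
        rw [sum_comm, mul_sum]
        simp_rw [mul_sum, Real.norm_eq_abs]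
    _ ≤ r * ∑ _j : m, ‖B‖ := by
        gcongr with j
        exact sum_norm_row_le_linfty_opNorm B j
    _ = r * Fintype.card m * ‖B‖ := by simp [mul_assoc]

theorem trace_inv_one_sub_le [DecidableEq n] {A : Matrix n n ℝ} {r : ℝ} (hr : 0 ≤ r)
    (hA : ∀ i j, |A i j| ≤ r) (hnorm : ‖A‖ ≤ 1 / 2) :
    IsUnit (1 - A) ∧
      trace (1 - A)⁻¹ ≤ Fintype.card n + trace A + 2 * r * Fintype.card n * ‖A‖ := by
  have hunit : IsUnit (1 - A) := isUnit_one_sub_of_norm_lt_one (by linarith)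
  refine ⟨hunit, ?_⟩
  set M := (1 - A)⁻¹
  have hM : (1 - A) * M = 1 := mul_nonsing_inv _ ((isUnit_iff_isUnit_det _).mp hunit)
  have hM_norm : ‖M‖ ≤ 2 :=
    calc ‖M‖ ≤ ‖(1 : Matrix n n ℝ)‖ / (1 - ‖A‖) :=
          norm_le_of_one_sub_mul_eq_one hM (by linarith)
      _ ≤ 1 / (1 / 2) := by
          gcongr
          · exact linfty_opNorm_one_le
          · linarith
      _ = 2 := by norm_num
  have hM_expand : M = 1 + A + A * (A * M) := by
    have hfix : M = 1 + A * M := by rw [← hM]; noncomm_ring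
    calc M = 1 + A * (1 + A * M) := by rw [← hfix, ← hfix]
      _ = 1 + A + A * (A * M) := by noncomm_ring
  have htail : trace (A * (A * M)) ≤ r * Fintype.card n * (2 * ‖A‖) :=
    calc trace (A * (A * M)) ≤ r * Fintype.card n * ‖A * M‖ :=
          (le_abs_self _).trans (abs_trace_mul_le hr hA _)
      _ ≤ r * Fintype.card n * (‖A‖ * 2) := by
          gcongr
          exact (norm_mul_le _ _).trans (by gcongr)
      _ = r * Fintype.card n * (2 * ‖A‖) := by ring
  rw [hM_expand, trace_add, trace_add, trace_one]
  linarith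

end Matrix

attribute [local instance] Matrix.linftyOpNormedRing

theorem norm_Cmat {p : ℕ} [NeZero p] (θ : ZMod p × ZMod p → ℝ) :
    ‖Cmat p θ‖ = ∑ x, |θ x| := by
  rw [Matrix.linfty_opNorm_def]
  have hrow : ∀ a, ∑ b, ‖Cmat p θ a b‖₊ = ∑ x, ‖θ x‖₊ := fun a =>
    Equiv.sum_comp (Equiv.subRight a) fun x => ‖θ x‖₊
  rw [sup_congr rfl fun a _ => hrow a, sup_const univ_nonempty]
  push_cast
  exact sum_congr rfl fun x _ => Real.norm_eq_abs _

theorem trace_Cmat {p : ℕ} [NeZero p] (θ : ZMod p × ZMod p → ℝ) :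
    Matrix.trace (Cmat p θ) = (p : ℝ) ^ 2 * θ 0 := by
  simp [Matrix.trace, Cmat, sq]

theorem stmt_12_general (p d : ℕ) [NeZero p] (r : ℝ) (hr : 0 < r)
    (θ : ZMod p × ZMod p → ℝ)
    (h0 : θ 0 = 0)
    (hsupp : Set.ncard {x : ZMod p × ZMod p | θ x ≠ 0} ≤ 2 * d)
    (hbound : ∀ x : ZMod p × ZMod p, |θ x| ≤ r)
    (hl1 : ∑ x : ZMod p × ZMod p, |θ x| ≤ 1 / 2) :
    IsUnit (1 - Cmat p θ) ∧
    (1 / (p : ℝ) ^ 2) * Matrix.trace (1 - Cmat p θ)⁻¹ ≤ 1 + 16 * d * r ^ 2 := by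
  have hl1_le : ∑ x, |θ x| ≤ 2 * d * r := by
    simpa using Finset.sum_abs_le_of_ncard_support_le hr.le hsupp hbound
  obtain ⟨hunit, htrace⟩ := Matrix.trace_inv_one_sub_le (A := Cmat p θ) hr.le
    (fun a b => hbound (b - a)) (by rwa [norm_Cmat])
  refine ⟨hunit, ?_⟩
  have hp : (0 : ℝ) < (p : ℝ) ^ 2 := by
    have : (0 : ℝ) < p := by exact_mod_cast Nat.pos_of_neZero p
    positivity
  rw [trace_Cmat, h0, norm_Cmat, Fintype.card_prod, ZMod.card, ← sq] at htrace
  push_cast at htrace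
  have hl1_sq : 2 * r * ∑ x, |θ x| ≤ 16 * d * r ^ 2 := by
    nlinarith [mul_le_mul_of_nonneg_left hl1_le (by positivity : 0 ≤ 2 * r)]
  rw [one_div_mul_eq_div, div_le_iff₀ hp]
  nlinarith

/-- If `θ(0) = 0`, `θ` is even, `θ` is nonzero at no more than `2d` points, `|θ| ≤ r`
pointwise and `∑ |θ| ≤ 1/2`, then `I - C(θ)` is invertible and
`p⁻² tr[(I - C(θ))⁻¹] ≤ 1 + 16 d r²`. -/
theorem stmt_12 (p d : ℕ) [NeZero p] (hd : 0 < d) (r : ℝ) (hr : 0 < r)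
    (θ : ZMod p × ZMod p → ℝ)
    (h0 : θ 0 = 0)
    (hsym : ∀ x : ZMod p × ZMod p, θ (-x) = θ x)
    (hsupp : Set.ncard {x : ZMod p × ZMod p | θ x ≠ 0} ≤ 2 * d)
    (hbound : ∀ x : ZMod p × ZMod p, |θ x| ≤ r)
    (hl1 : ∑ x : ZMod p × ZMod p, |θ x| ≤ 1 / 2) :
    IsUnit (1 - Cmat p θ) ∧
    (1 / (p : ℝ) ^ 2) * Matrix.trace (1 - Cmat p θ)⁻¹ ≤ 1 + 16 * d * r ^ 2 :=
  stmt_12_general p d r hr θ h0 hsupp hbound hl1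
end

section
/- For every real number x > 0, x − 1 − log(x) ≤ (9/64) · ( x − 1/x )². -/
/-!
Let `g x = (9/64) (x - 1/x)² - (x - 1 - log x)`. Then `g 1 = 0` and
`g' x = (x - 1) (9x³ - 23x² + 9x + 9) / (32x³)`; the cubic factor is positive for `x > 0`,
so `g` decreases on `(0, 1]` and increases on `[1, ∞)`, and its minimum over `x > 0` is `g 1 = 0`.
-/

open Real Set

noncomputable def logBoundGap (x : ℝ) : ℝ := 9 / 64 * (x - x⁻¹) ^ 2 - (x - 1 - log x)

lemma hasDerivAt_logBoundGap {x : ℝ} (hx : x ≠ 0) :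
    HasDerivAt logBoundGap ((x - 1) * (9 * x ^ 3 - 23 * x ^ 2 + 9 * x + 9) / (32 * x ^ 3)) x := by
  refine ((((hasDerivAt_id' x).fun_sub (hasDerivAt_inv hx)).fun_pow 2).const_mul (9 / 64)).fun_sub
    (((hasDerivAt_id' x).sub_const 1).fun_sub (hasDerivAt_log hx)) |>.congr_deriv ?_
  norm_num
  field_simp
  ring

lemma cubic_pos {y : ℝ} (hy : 0 < y) : 0 < 9 * y ^ 3 - 23 * y ^ 2 + 9 * y + 9 := by
  nlinarith [sq_nonneg (3 * y - 4), mul_nonneg hy.le (sq_nonneg (3 * y - 4))]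

lemma deriv_logBoundGap {x : ℝ} (hx : 0 < x) :
    deriv logBoundGap x = (x - 1) * (9 * x ^ 3 - 23 * x ^ 2 + 9 * x + 9) / (32 * x ^ 3) :=
  (hasDerivAt_logBoundGap hx.ne').deriv

lemma differentiableOn_logBoundGap {s : Set ℝ} (hs : s ⊆ Ioi 0) :
    DifferentiableOn ℝ logBoundGap s := fun _ hx ↦
  (hasDerivAt_logBoundGap (hs hx).ne').differentiableAt.differentiableWithinAt

lemma isMinOn_logBoundGap : IsMinOn logBoundGap (Ioi 0) 1 := by
  refine isMinOn_Ioi_of_deriv (hasDerivAt_logBoundGap one_ne_zero).continuousAt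
    (differentiableOn_logBoundGap Ioo_subset_Ioi_self)
    (differentiableOn_logBoundGap (Ioi_subset_Ioi zero_le_one)) (fun x hx ↦ ?_) (fun x hx ↦ ?_)
  · have hx0 : 0 < x := hx.1
    rw [deriv_logBoundGap hx0]
    exact div_nonpos_of_nonpos_of_nonneg
      (mul_nonpos_of_nonpos_of_nonneg (sub_nonpos.mpr hx.2.le) (cubic_pos hx0).le) (by positivity)
  · have hx0 : 0 < x := zero_lt_one.trans hx
    rw [deriv_logBoundGap hx0]
    exact div_nonneg (mul_nonneg (sub_nonneg.mpr (le_of_lt hx)) (cubic_pos hx0).le) (by positivity)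

/-- For every real number `x > 0`, `x - 1 - log x ≤ (9/64) * (x - 1/x)^2`. -/
theorem stmt_13 : ∀ x : ℝ, 0 < x → x - 1 - Real.log x ≤ (9 / 64) * (x - 1 / x) ^ 2 := by
  intro x hx
  have hmin : logBoundGap 1 ≤ logBoundGap x := isMinOn_logBoundGap hx
  have hone : logBoundGap 1 = 0 := by norm_num [logBoundGap]
  rw [hone, logBoundGap, ← one_div] at hmin
  linarith
end

section
/- Let p be a positive integer, σ² > 0, and let θ : (ℤ/pℤ)² → ℝ satisfy θ(0) = 0, θ(−x) = θ(x) for all x, and ‖θ‖₁ := Σ_x |θ(x)| < 1. Let Σ = σ² · (I − C(θ))⁻¹, which is a symmetric positive definite matrix indexed by (ℤ/pℤ)² × (ℤ/pℤ)². Let A be any nonempty subset of (ℤ/pℤ)² \ {0}, let Σ_{AA} denote the principal submatrix of Σ with rows and columns indexed by A, and let Σ_{A,0} denote the column vector (Σ(a, 0))_{a∈A}. Then the vector β = (Σ_{AA})⁻¹ · Σ_{A,0} (well defined since Σ_{AA} is positive definite) satisfies Σ_{a∈A} |β_a| ≤ ‖θ‖₁. -/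
open Matrix Finset

section

variable {ι κ : Type*} [Fintype ι] [Fintype κ]

theorem sum_abs_mulVec_le_of_sum_abs_col_le {K : Matrix κ ι ℝ} {t : ℝ}
    (hK : ∀ d, ∑ c, |K c d| ≤ t) (r : ι → ℝ) :
    ∑ c, |(K *ᵥ r) c| ≤ t * ∑ d, |r d| :=
  calc ∑ c, |(K *ᵥ r) c| ≤ ∑ c, ∑ d, |K c d| * |r d| :=
        sum_le_sum fun c _ => (abs_sum_le_sum_abs _ _).trans_eq (by simp only [abs_mul])
    _ = ∑ d, (∑ c, |K c d|) * |r d| := by rw [sum_comm]; simp only [sum_mul]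
    _ ≤ ∑ d, t * |r d| := sum_le_sum fun d _ => mul_le_mul_of_nonneg_right (hK d) (abs_nonneg _)
    _ = t * ∑ d, |r d| := (mul_sum _ _ _).symm

variable [DecidableEq ι]

theorem isUnit_det_one_sub_of_sum_abs_col_lt {K : Matrix ι ι ℝ} {t : ℝ}
    (hK : ∀ d, ∑ c, |K c d| ≤ t) (ht : t < 1) : IsUnit (1 - K).det := by
  rw [isUnit_iff_ne_zero]
  intro hdet
  obtain ⟨v, hv0, hv⟩ := exists_mulVec_eq_zero_iff.mpr hdet
  have hKv : K *ᵥ v = v := by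
    rw [sub_mulVec, one_mulVec, sub_eq_zero] at hv
    exact hv.symm
  have hcontract := sum_abs_mulVec_le_of_sum_abs_col_le hK v
  rw [hKv] at hcontract
  have hsum : ∑ d, |v d| = 0 :=
    le_antisymm (by nlinarith [sum_nonneg fun d (_ : d ∈ univ) => abs_nonneg (v d)])
      (sum_nonneg fun d _ => abs_nonneg _)
  refine hv0 (funext fun d => abs_eq_zero.mp ?_)
  exact (sum_eq_zero_iff_of_nonneg fun d _ => abs_nonneg (v d)).mp hsum d (mem_univ d)

theorem sum_abs_le_of_sub_mulVec_eq_single_sub {K : Matrix ι ι ℝ} {t : ℝ}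
    (hK : ∀ d, ∑ c, |K c d| ≤ t) (ht : t ≤ 1) {r b : ι → ℝ} {i : ι} (hbi : b i = 0)
    (hrb : ∀ c, b c ≠ 0 → r c = 0) (hr : r - K *ᵥ r = Pi.single i 1 - b) :
    ∑ c, |b c| ≤ t := by
  have ht0 : 0 ≤ t := (sum_nonneg fun c _ => abs_nonneg (K c i)).trans (hK i)
  have hKr : K *ᵥ r = r - Pi.single i 1 + b := by rw [sub_add, ← hr, sub_sub_cancel]
  have hoff : ∀ c ∈ ({i}ᶜ : Finset ι), |(K *ᵥ r) c| = |r c| + |b c| := by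
    intro c hc
    have hci : c ≠ i := by simpa using hc
    rw [hKr, Pi.add_apply, Pi.sub_apply, Pi.single_eq_of_ne hci, sub_zero]
    by_cases hbc : b c = 0
    · rw [hbc, add_zero, abs_zero, add_zero]
    · rw [hrb c hbc, zero_add, abs_zero, zero_add]
  have hKri : (K *ᵥ r) i = r i - 1 := by simp [hKr, hbi]
  have key := sum_abs_mulVec_le_of_sum_abs_col_le hK r
  rw [Fintype.sum_eq_add_sum_compl i, Fintype.sum_eq_add_sum_compl i (fun d => |r d|),
    sum_congr rfl hoff, sum_add_distrib, hKri] at key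
  rw [Fintype.sum_eq_add_sum_compl i, hbi, abs_zero, zero_add]
  have hR : 0 ≤ ∑ c ∈ {i}ᶜ, |r c| := sum_nonneg fun c _ => abs_nonneg _
  have hri : |r i| ≤ 1 + |r i - 1| := by
    simpa using abs_add_le 1 (r i - 1)
  nlinarith [abs_nonneg (r i - 1), mul_le_mul_of_nonneg_left hri ht0]

end

theorem extend_subtype_val_apply_of_notMem {ι R : Type*} [Zero R] {A : Finset ι} (x : A → R)
    {c : ι} (hc : c ∉ A) : Function.extend Subtype.val x 0 c = 0 :=
  Function.extend_apply' _ _ _ fun ⟨a, ha⟩ => hc (ha ▸ a.2)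

theorem mulVec_extend_val {R ι κ : Type*} [NonUnitalNonAssocSemiring R] [Fintype ι]
    {A : Finset ι} (S : Matrix κ ι R) (x : A → R) :
    S *ᵥ Function.extend Subtype.val x 0 = S.submatrix id Subtype.val *ᵥ x := by
  ext a
  simp only [mulVec, dotProduct, submatrix_apply, id]
  rw [← sum_subset (subset_univ A), ← sum_coe_sort A]
  · simp only [Subtype.val_injective.extend_apply]
  · intro c _ hc
    rw [extend_subtype_val_apply_of_notMem x hc, mul_zero]

theorem mulVec_single_sub_extend_eq_zero {R ι : Type*} [CommRing R] [Fintype ι] [DecidableEq ι]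
    {S : Matrix ι ι R} {A : Finset ι} {i : ι} {β : A → R}
    (hβ : S.submatrix Subtype.val Subtype.val *ᵥ β = fun a : A => S a i) (a : A) :
    (S *ᵥ (Pi.single i 1 - Function.extend Subtype.val β 0)) a = 0 := by
  rw [mulVec_sub, mulVec_extend_val, mulVec_single_one, Pi.sub_apply, sub_eq_zero]
  exact (congrFun hβ a).symm

theorem sum_abs_Cmat_col (p : ℕ) [NeZero p] (θ : ZMod p × ZMod p → ℝ) (d : ZMod p × ZMod p) :
    ∑ c, |Cmat p θ c d| = ∑ x, |θ x| :=
  Fintype.sum_equiv (Equiv.subLeft d) _ _ fun _ => rfl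

theorem stmt_15_general (p : ℕ) [NeZero p] (σ2 : ℝ) (hσ2 : 0 < σ2)
    (θ : ZMod p × ZMod p → ℝ)
    (hl1 : ∑ x : ZMod p × ZMod p, |θ x| < 1)
    (Sig : Matrix (ZMod p × ZMod p) (ZMod p × ZMod p) ℝ)
    (hSig : Sig = σ2 • (1 - Cmat p θ)⁻¹)
    (A : Finset (ZMod p × ZMod p))
    (h0A : (0 : ZMod p × ZMod p) ∉ A)
    (β : {x // x ∈ A} → ℝ)
    (hβ : β = (Matrix.of fun a b : {x // x ∈ A} => Sig a.1 b.1)⁻¹.mulVec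
      fun a : {x // x ∈ A} => Sig a.1 0) :
    ∑ a : {x // x ∈ A}, |β a| ≤ ∑ x : ZMod p × ZMod p, |θ x| := by
  classical
  have hK : ∀ d, ∑ c, |Cmat p θ c d| ≤ ∑ x, |θ x| := fun d => (sum_abs_Cmat_col p θ d).le
  set M := Sig.submatrix (Subtype.val : A → _) Subtype.val
  by_cases hM : IsUnit M.det
  swap
  · rw [hβ, show (Matrix.of fun a b : A => Sig a.1 b.1) = M from rfl,
      nonsing_inv_apply_not_isUnit _ hM, zero_mulVec]
    simpa using sum_nonneg fun x _ => abs_nonneg (θ x)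
  have hnormal : M *ᵥ β = fun a : A => Sig a 0 := by
    rw [hβ, mulVec_mulVec]
    exact (mul_nonsing_inv M hM).symm ▸ one_mulVec _
  set b := Function.extend Subtype.val β 0
  set r := (1 - Cmat p θ)⁻¹ *ᵥ (Pi.single 0 1 - b)
  have hr : r - Cmat p θ *ᵥ r = Pi.single 0 1 - b := by
    have h : (1 - Cmat p θ) *ᵥ r = Pi.single 0 1 - b := by
      simp only [r, mulVec_mulVec,
        mul_nonsing_inv _ (isUnit_det_one_sub_of_sum_abs_col_lt hK hl1), one_mulVec]
    rwa [sub_mulVec, one_mulVec] at h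
  have hrA : ∀ a ∈ A, r a = 0 := by
    intro a ha
    have h := mulVec_single_sub_extend_eq_zero hnormal ⟨a, ha⟩
    rw [hSig, smul_mulVec, Pi.smul_apply, smul_eq_mul] at h
    exact (mul_eq_zero.mp h).resolve_left hσ2.ne'
  have hbA : ∀ c, b c ≠ 0 → c ∈ A := fun c hc =>
    not_not.mp fun hcA => hc (extend_subtype_val_apply_of_notMem β hcA)
  calc ∑ a, |β a| = ∑ c ∈ A, |b c| := by
        rw [← sum_coe_sort A]; simp only [b, Subtype.val_injective.extend_apply]
    _ ≤ ∑ c, |b c| := sum_le_univ_sum_of_nonneg fun c => abs_nonneg _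
    _ ≤ ∑ x, |θ x| := sum_abs_le_of_sub_mulVec_eq_single_sub hK hl1.le
        (extend_subtype_val_apply_of_notMem β h0A)
        (fun c hc => hrA c (hbA c hc)) hr

/-- `ℓ¹`-contraction of best linear prediction coefficients for a GMRF on the torus:
for the covariance `Σ = σ² (I - C(θ))⁻¹` with `θ(0) = 0`, `θ` even and `‖θ‖₁ < 1`, and any
nonempty set `A ⊆ (ℤ/pℤ)² \ {0}`, the coefficient vector `β = (Σ_{AA})⁻¹ Σ_{A,0}` of the
best linear prediction of coordinate `0` from the coordinates in `A` satisfies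
`∑_{a ∈ A} |β_a| ≤ ‖θ‖₁`. -/
theorem stmt_15 (p : ℕ) [NeZero p] (σ2 : ℝ) (hσ2 : 0 < σ2)
    (θ : ZMod p × ZMod p → ℝ)
    (h0 : θ 0 = 0)
    (hsym : ∀ x : ZMod p × ZMod p, θ (-x) = θ x)
    (hl1 : ∑ x : ZMod p × ZMod p, |θ x| < 1)
    (Sig : Matrix (ZMod p × ZMod p) (ZMod p × ZMod p) ℝ)
    (hSig : Sig = σ2 • (1 - Cmat p θ)⁻¹)
    (A : Finset (ZMod p × ZMod p)) (hA : A.Nonempty)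
    (h0A : (0 : ZMod p × ZMod p) ∉ A)
    (β : {x // x ∈ A} → ℝ)
    (hβ : β = (Matrix.of fun a b : {x // x ∈ A} => Sig a.1 b.1)⁻¹.mulVec
      fun a : {x // x ∈ A} => Sig a.1 0) :
    ∑ a : {x // x ∈ A}, |β a| ≤ ∑ x : ZMod p × ZMod p, |θ x| :=
  stmt_15_general p σ2 hσ2 θ hl1 Sig hSig A h0A β hβ
end

section
/- Let N and d be positive integers and let F_1, …, F_d be diagonal N×N real matrices that form an orthonormal family with respect to the Frobenius inner product (i.e., tr(F_i F_j) = δ_{i,j}). Then Σ_{i=1}^d Σ_{j=1}^d ‖F_i F_j‖_F² ≤ d, where ‖M‖_F² = tr(MᵀM) denotes the squared Frobenius norm. -/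
open Matrix

/-!
The diagonals `f_i` of the `F_i` are orthonormal in `ℝᴺ`, so Bessel's inequality against the
basis vector `e_k` gives `∑ᵢ f_i(k)² ≤ 1`. Hence
`∑_{i,j} ‖F_i F_j‖² = ∑_k (∑ᵢ f_i(k)²)² ≤ ∑_k ∑ᵢ f_i(k)² = d`.
-/

namespace Matrix

variable {n R : Type*} [Fintype n]

theorem IsDiag.mul_apply [NonUnitalNonAssocSemiring R] {A : Matrix n n R} (hA : A.IsDiag)
    (B : Matrix n n R) (i j : n) : (A * B) i j = A i i * B i j := by
  rw [Matrix.mul_apply, Finset.sum_eq_single i (fun k _ hk => by rw [hA hk.symm, zero_mul])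
    (by simp)]

theorem IsDiag.mul [NonUnitalNonAssocSemiring R] {A B : Matrix n n R} (hA : A.IsDiag)
    (hB : B.IsDiag) : (A * B).IsDiag := fun i j hij => by
  change (A * B) i j = 0
  rw [hA.mul_apply, hB hij, mul_zero]

theorem IsDiag.trace_transpose_mul [NonUnitalNonAssocSemiring R] {A : Matrix n n R}
    (hA : A.IsDiag) (B : Matrix n n R) : trace (Aᵀ * B) = ∑ k, A k k * B k k := by
  simp only [trace, diag_apply, hA.transpose.mul_apply, transpose_apply]

end Matrix

theorem Orthonormal.sum_sq_apply_le_one {ι n : Type*} [Fintype ι] [Fintype n] [DecidableEq n]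
    {v : ι → EuclideanSpace ℝ n} (hv : Orthonormal ℝ v) (k : n) : ∑ i, v i k ^ 2 ≤ 1 := by
  simpa [EuclideanSpace.inner_single_right, PiLp.norm_single] using
    hv.sum_inner_products_le (s := Finset.univ) (EuclideanSpace.single k (1 : ℝ))

theorem Finset.sum_sum_sum_mul_le_of_sum_le_one {ι n : Type*} [Fintype ι] [Fintype n]
    {w : ι → n → ℝ} (hw : ∀ i k, 0 ≤ w i k) (hcol : ∀ k, ∑ i, w i k ≤ 1) :
    ∑ i, ∑ j, ∑ k, w i k * w j k ≤ ∑ i, ∑ k, w i k := by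
  calc ∑ i, ∑ j, ∑ k, w i k * w j k = ∑ i, ∑ k, w i k * ∑ j, w j k := by
        simp only [Finset.mul_sum]
        exact Finset.sum_congr rfl fun i _ => Finset.sum_comm
    _ ≤ ∑ i, ∑ k, w i k * 1 := by
        gcongr with i _ k _
        · exact hw i k
        · exact hcol k
    _ = ∑ i, ∑ k, w i k := by simp only [mul_one]

theorem stmt_17_general (N d : ℕ)
    (F : Fin d → Matrix (Fin N) (Fin N) ℝ)
    (hdiag : ∀ i, (F i).IsDiag)
    (horth : ∀ i j, Matrix.trace ((F i)ᵀ * F j) = if i = j then (1 : ℝ) else 0) :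
    ∑ i, ∑ j, Matrix.trace ((F i * F j)ᵀ * (F i * F j)) ≤ (d : ℝ) := by
  set v : Fin d → EuclideanSpace ℝ (Fin N) := fun i => WithLp.toLp 2 (F i).diag
  have hv : Orthonormal ℝ v := by
    rw [orthonormal_iff_ite]
    intro i j
    rw [← horth, (hdiag i).trace_transpose_mul, EuclideanSpace.inner_toLp_toLp]
    simp [dotProduct, mul_comm]
  have hfrob : ∀ i j, trace ((F i * F j)ᵀ * (F i * F j)) = ∑ k, v i k ^ 2 * v j k ^ 2 := by
    intro i j
    rw [((hdiag i).mul (hdiag j)).trace_transpose_mul]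
    refine Finset.sum_congr rfl fun k _ => ?_
    rw [(hdiag i).mul_apply]
    simp only [v, diag_apply]
    ring
  have hunit : ∀ i, ∑ k, v i k ^ 2 = 1 := fun i => by
    simpa [(hdiag i).trace_transpose_mul, sq, v] using horth i i
  calc ∑ i, ∑ j, trace ((F i * F j)ᵀ * (F i * F j)) = ∑ i, ∑ j, ∑ k, v i k ^ 2 * v j k ^ 2 := by
        simp only [hfrob]
    _ ≤ ∑ i, ∑ k, v i k ^ 2 :=
        Finset.sum_sum_sum_mul_le_of_sum_le_one (fun _ _ => sq_nonneg _) hv.sum_sq_apply_le_one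
    _ = d := by simp [hunit]

/-- If `F₁, …, F_d` are diagonal `N × N` real matrices, orthonormal for the Frobenius
inner product, then `∑_{i,j} ‖F_i F_j‖_F² ≤ d`. -/
theorem stmt_17 (N d : ℕ) (hN : 0 < N) (hd : 0 < d)
    (F : Fin d → Matrix (Fin N) (Fin N) ℝ)
    (hdiag : ∀ i, (F i).IsDiag)
    (horth : ∀ i j, Matrix.trace ((F i)ᵀ * F j) = if i = j then (1 : ℝ) else 0) :
    ∑ i, ∑ j, Matrix.trace ((F i * F j)ᵀ * (F i * F j)) ≤ (d : ℝ) :=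
  stmt_17_general N d F hdiag horth
end

section
/- Let m, n, d be positive integers with d ≤ m, let Y_1, …, Y_n be i.i.d. standard Gaussian random vectors in ℝ^m, and set S = n⁻¹ Σ_{k=1}^n Y_k Y_kᵀ. Let D be a diagonal m×m real matrix with nonnegative entries, and let U be a d-dimensional linear subspace of the space of diagonal m×m real matrices. Let Z = ‖ Π_U( √D · (S − I_m) ) ‖_F, where Π_U is the orthogonal projection onto U with respect to the Frobenius inner product on all m×m real matrices, √D is the entrywise square root of D, and ‖·‖_F is the Frobenius norm. Then 𝔼[Z] ≤ √( 2·d·φ_max(D) / n ), where φ_max(D) is the largest diagonal entry of D. -/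
open MeasureTheory ProbabilityTheory Matrix

section Helpers
open Real
open scoped ENNReal
set_option linter.unusedSectionVars false
set_option maxHeartbeats 1000000

open scoped ENNReal

lemma aux_moment_int (k : ℕ) :
    Integrable (fun x : ℝ => x ^ k * Real.exp (-(1/2) * x ^ 2)) := by
  have h := integrable_rpow_mul_exp_neg_mul_sq (b := (1/2:ℝ)) (by norm_num)
    (s := (k : ℝ)) (lt_of_lt_of_le neg_one_lt_zero (Nat.cast_nonneg k))
  simpa [Real.rpow_natCast] using h

lemma aux_even_moment (k : ℕ) :
    ∫ x : ℝ, x ^ (2*k) * Real.exp (-(1/2) * x ^ 2)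
      = (1/2:ℝ) ^ (-(2*(k:ℝ)+1)/2) * Real.Gamma ((2*(k:ℝ)+1)/2) := by
  have habs : ∀ x : ℝ, (fun y : ℝ => y ^ (2*k) * Real.exp (-(1/2) * y ^ 2)) |x|
      = x ^ (2*k) * Real.exp (-(1/2) * x ^ 2) := by
    intro x
    simp only
    rw [Even.pow_abs ⟨k, by ring⟩, sq_abs]
  have h1 : ∫ x : ℝ, x ^ (2*k) * Real.exp (-(1/2) * x ^ 2)
      = 2 * ∫ x in Set.Ioi (0:ℝ), x ^ (2*k) * Real.exp (-(1/2) * x ^ 2) := by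
    rw [← integral_comp_abs (f := fun y : ℝ => y ^ (2*k) * Real.exp (-(1/2) * y ^ 2))]
    simp_rw [habs]
  have h2 : ∫ x in Set.Ioi (0:ℝ), x ^ (2*k) * Real.exp (-(1/2) * x ^ 2)
      = ∫ x in Set.Ioi (0:ℝ), x ^ ((2*k : ℕ) : ℝ) * Real.exp (-(1/2) * x ^ (2:ℝ)) := by
    refine setIntegral_congr_fun measurableSet_Ioi (fun x _ => ?_)
    rw [Real.rpow_natCast, show ((2:ℝ)) = ((2:ℕ):ℝ) by norm_num, Real.rpow_natCast]
  have h3 := integral_rpow_mul_exp_neg_mul_rpow (p := (2:ℝ)) (q := ((2*k : ℕ) : ℝ))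
    (b := (1/2:ℝ)) two_pos (lt_of_lt_of_le neg_one_lt_zero (Nat.cast_nonneg _)) (by norm_num)
  rw [h1, h2, h3]
  push_cast
  ring_nf

lemma aux_half32 : (1/2:ℝ) ^ (-(2*(1:ℝ)+1)/2) = 2 * Real.sqrt 2 := by
  have h : (1/2:ℝ) ^ (-(2*(1:ℝ)+1)/2) = (2:ℝ) ^ ((3:ℝ)/2) := by
    rw [one_div, ← Real.rpow_neg_one (2:ℝ), ← Real.rpow_mul (by norm_num)]
    norm_num
  rw [h, show ((3:ℝ)/2) = 1 + (1/2:ℝ) by norm_num, Real.rpow_add two_pos,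
    Real.rpow_one, ← Real.sqrt_eq_rpow]

lemma aux_half52 : (1/2:ℝ) ^ (-(2*(2:ℝ)+1)/2) = 4 * Real.sqrt 2 := by
  have h : (1/2:ℝ) ^ (-(2*(2:ℝ)+1)/2) = (2:ℝ) ^ ((5:ℝ)/2) := by
    rw [one_div, ← Real.rpow_neg_one (2:ℝ), ← Real.rpow_mul (by norm_num)]
    norm_num
  rw [h, show ((5:ℝ)/2) = 2 + (1/2:ℝ) by norm_num, Real.rpow_add two_pos,
    ← Real.sqrt_eq_rpow]
  norm_num

lemma aux_G32 : Real.Gamma ((2*(1:ℝ)+1)/2) = Real.sqrt π / 2 := by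
  rw [show (2*(1:ℝ)+1)/2 = 1/2 + 1 by norm_num, Real.Gamma_add_one (by norm_num),
    Real.Gamma_one_half_eq]
  ring

lemma aux_G52 : Real.Gamma ((2*(2:ℝ)+1)/2) = 3 * Real.sqrt π / 4 := by
  rw [show (2*(2:ℝ)+1)/2 = (1/2 + 1) + 1 by norm_num, Real.Gamma_add_one (by norm_num),
    Real.Gamma_add_one (by norm_num), Real.Gamma_one_half_eq]
  ring

lemma aux_I2 : ∫ x : ℝ, x ^ 2 * Real.exp (-(1/2) * x ^ 2) = Real.sqrt (2*π) := by
  have h := aux_even_moment 1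
  push_cast at h
  rw [show ((1:ℝ)/2) ^ (-(2 * 1 + 1) / 2 : ℝ) = 2 * Real.sqrt 2 by
      have := aux_half32; push_cast at this; exact this,
    show Real.Gamma ((2 * 1 + 1) / 2 : ℝ) = Real.sqrt π / 2 by
      have := aux_G32; push_cast at this; exact this] at h
  rw [h, Real.sqrt_mul (by norm_num)]
  ring

lemma aux_I4 : ∫ x : ℝ, x ^ 4 * Real.exp (-(1/2) * x ^ 2) = 3 * Real.sqrt (2*π) := by
  have h := aux_even_moment 2
  push_cast at h
  rw [show ((1:ℝ)/2) ^ (-(2 * 2 + 1) / 2 : ℝ) = 4 * Real.sqrt 2 by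
      have := aux_half52; push_cast at this; exact this,
    show Real.Gamma ((2 * 2 + 1) / 2 : ℝ) = 3 * Real.sqrt π / 4 by
      have := aux_G52; push_cast at this; exact this] at h
  rw [h, Real.sqrt_mul (by norm_num)]
  ring

lemma aux_pdf01 (x : ℝ) :
    gaussianPDFReal 0 1 x = (Real.sqrt (2*π))⁻¹ * Real.exp (-(1/2) * x ^ 2) := by
  simp only [gaussianPDFReal, NNReal.coe_one, mul_one, sub_zero]
  ring_nf

lemma aux_pdf_meas : Measurable (fun x => (gaussianPDFReal 0 1 x).toNNReal) :=
  (measurable_gaussianPDFReal 0 1).real_toNNReal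

lemma aux_gauss_repr : gaussianReal 0 1
    = volume.withDensity (fun x => ((gaussianPDFReal 0 1 x).toNNReal : ℝ≥0∞)) := by
  rw [gaussianReal_of_var_ne_zero 0 one_ne_zero]
  rfl

lemma aux_int_gauss_pow (k : ℕ) :
    Integrable (fun x : ℝ => x ^ k) (gaussianReal 0 1) := by
  rw [aux_gauss_repr, integrable_withDensity_iff_integrable_smul aux_pdf_meas]
  refine (Integrable.const_mul (aux_moment_int k) ((Real.sqrt (2*π))⁻¹)).congr
    (ae_of_all _ fun x => ?_)
  simp only [NNReal.smul_def, Real.coe_toNNReal _ (gaussianPDFReal_nonneg 0 1 x), smul_eq_mul]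
  rw [aux_pdf01]
  ring

lemma aux_integral_gauss_pow (k : ℕ) :
    ∫ x, x ^ k ∂(gaussianReal 0 1)
      = (Real.sqrt (2*π))⁻¹ * ∫ x : ℝ, x ^ k * Real.exp (-(1/2) * x ^ 2) := by
  rw [aux_gauss_repr, integral_withDensity_eq_integral_smul aux_pdf_meas]
  rw [← integral_const_mul]
  congr 1
  funext x
  simp only [NNReal.smul_def, Real.coe_toNNReal _ (gaussianPDFReal_nonneg 0 1 x), smul_eq_mul]
  rw [aux_pdf01]
  ring

lemma aux_sqrt2pi_pos : 0 < Real.sqrt (2*π) :=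
  Real.sqrt_pos.2 (by positivity)

lemma aux_E2 : ∫ x, x ^ 2 ∂(gaussianReal 0 1) = 1 := by
  rw [aux_integral_gauss_pow 2, aux_I2, inv_mul_cancel₀ aux_sqrt2pi_pos.ne']

lemma aux_E4 : ∫ x, x ^ 4 ∂(gaussianReal 0 1) = 3 := by
  rw [aux_integral_gauss_pow 4, aux_I4]
  field_simp

variable {Ω : Type} [MeasureSpace Ω] [IsProbabilityMeasure (ℙ : Measure Ω)]

lemma aux_transfer_int {g : Ω → ℝ} (hg : Measurable g)
    (hmap : Measure.map g ℙ = gaussianReal 0 1) {f : ℝ → ℝ} (hf : Measurable f)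
    (hfi : Integrable f (gaussianReal 0 1)) : Integrable (fun ω => f (g ω)) ℙ := by
  rw [← hmap] at hfi
  exact (integrable_map_measure (hf.aestronglyMeasurable) hg.aemeasurable).1 hfi

lemma aux_transfer_eq {g : Ω → ℝ} (hg : Measurable g)
    (hmap : Measure.map g ℙ = gaussianReal 0 1) {f : ℝ → ℝ} (hf : Measurable f) :
    ∫ ω, f (g ω) ∂ℙ = ∫ x, f x ∂(gaussianReal 0 1) := by
  rw [← hmap, integral_map hg.aemeasurable]
  rw [hmap]
  exact hf.aestronglyMeasurable

lemma aux_T_int : Integrable (fun x : ℝ => x^2 - 1) (gaussianReal 0 1) :=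
  (aux_int_gauss_pow 2).sub (integrable_const 1)

lemma aux_Tsq_int : Integrable (fun x : ℝ => (x^2 - 1) * (x^2 - 1)) (gaussianReal 0 1) := by
  have h : Integrable (fun x : ℝ => x^4 - 2 * x^2 + 1) (gaussianReal 0 1) :=
    ((aux_int_gauss_pow 4).sub ((aux_int_gauss_pow 2).const_mul 2)).add (integrable_const 1)
  exact h.congr (ae_of_all _ fun x => by ring)

lemma aux_T_integral : ∫ x, (x^2 - 1) ∂(gaussianReal 0 1) = 0 := by
  rw [integral_sub (aux_int_gauss_pow 2) (integrable_const 1), aux_E2]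
  simp

lemma aux_Tsq_integral : ∫ x, (x^2 - 1) * (x^2 - 1) ∂(gaussianReal 0 1) = 2 := by
  have h : ∫ x, (x^4 - 2 * x^2 + 1) ∂(gaussianReal 0 1) = 2 := by
    have h1 : Integrable (fun x : ℝ => x^4 - 2 * x^2) (gaussianReal 0 1) :=
      (aux_int_gauss_pow 4).sub ((aux_int_gauss_pow 2).const_mul 2)
    rw [show (fun x : ℝ => x^4 - 2 * x^2 + 1)
        = fun x : ℝ => (x^4 - 2 * x^2) + 1 from rfl,
      integral_add h1 (integrable_const 1),
      integral_sub (aux_int_gauss_pow 4) ((aux_int_gauss_pow 2).const_mul 2),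
      integral_const_mul, aux_E2, aux_E4]
    simp
    norm_num
  rw [← h]
  exact integral_congr_ae (ae_of_all _ fun x => by ring)


lemma aux_frob {m : ℕ} (A B : Matrix (Fin m) (Fin m) ℝ) :
    Matrix.trace (Aᵀ * B) = ∑ j, ∑ k, A j k * B j k := by
  simp only [Matrix.trace, Matrix.diag, Matrix.mul_apply, Matrix.transpose_apply]
  exact Finset.sum_comm

section LA

variable {m d : ℕ} (U : Submodule ℝ (Matrix (Fin m) (Fin m) ℝ))
  (hUdiag : ∀ M ∈ U, M.IsDiag)
  (P : Matrix (Fin m) (Fin m) ℝ →ₗ[ℝ] Matrix (Fin m) (Fin m) ℝ)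
  (hPmem : ∀ M, P M ∈ U)
  (hPfix : ∀ M ∈ U, P M = M)
  (hPorth : ∀ M, ∀ R ∈ U, Matrix.trace ((M - P M)ᵀ * R) = 0)

include hPorth in
/-- `tr(MᵀR) = tr((P M)ᵀ R)` for `R ∈ U`. -/
lemma aux_inner_proj (M R : Matrix (Fin m) (Fin m) ℝ) (hR : R ∈ U) :
    Matrix.trace (Mᵀ * R) = Matrix.trace ((P M)ᵀ * R) := by
  have h := hPorth M R hR
  rw [Matrix.transpose_sub, Matrix.sub_mul, Matrix.trace_sub, sub_eq_zero] at h
  exact h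

include hUdiag hPmem hPorth in
lemma aux_offdiag_zero {j k : Fin m} (hjk : j ≠ k) :
    P (Matrix.single j k 1) = 0 := by
  set R := P (Matrix.single j k 1) with hRdef
  have hR : R ∈ U := hPmem _
  have h1 : Matrix.trace ((Matrix.single j k 1)ᵀ * R) = Matrix.trace (Rᵀ * R) :=
    aux_inner_proj U P hPorth _ R hR
  have h2 : Matrix.trace ((Matrix.single j k 1)ᵀ * R) = R j k := by
    rw [aux_frob]
    rw [Finset.sum_eq_single j]
    · rw [Finset.sum_eq_single k]
      · simp [Matrix.single]
      · intro b _ hb; simp [Matrix.single, hb.symm]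
      · intro h; exact absurd (Finset.mem_univ k) h
    · intro a _ ha
      apply Finset.sum_eq_zero
      intro b _; simp [Matrix.single, ha.symm]
    · intro h; exact absurd (Finset.mem_univ j) h
  have hR0 : R j k = 0 := hUdiag R hR hjk
  rw [h2, hR0] at h1
  have h3 : ∑ a, ∑ b, R a b * R a b = 0 := by rw [← aux_frob]; exact h1.symm
  have h4 : ∀ a ∈ Finset.univ, ∀ b ∈ (Finset.univ : Finset (Fin m)), (0:ℝ) ≤ R a b * R a b :=
    fun a _ b _ => mul_self_nonneg _
  have hall : ∀ a b, R a b = 0 := by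
    intro a b
    by_contra hab
    have : (0:ℝ) < ∑ a, ∑ b, R a b * R a b := by
      calc (0:ℝ) < R a b * R a b := mul_self_pos.2 hab
      _ ≤ ∑ b', R a b' * R a b' := Finset.single_le_sum
          (f := fun b' => R a b' * R a b') (fun b' _ => mul_self_nonneg _)
          (Finset.mem_univ b)
      _ ≤ ∑ a', ∑ b', R a' b' * R a' b' := Finset.single_le_sum
          (f := fun a' => ∑ b', R a' b' * R a' b')
          (fun a' _ => Finset.sum_nonneg fun b' _ => mul_self_nonneg _) (Finset.mem_univ a)
    rw [h3] at this
    exact lt_irrefl 0 this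
  ext a b
  exact hall a b

include hUdiag hPmem hPorth in
lemma aux_P_decomp (M : Matrix (Fin m) (Fin m) ℝ) :
    P M = ∑ j, M j j • P (Matrix.single j j 1) := by
  conv_lhs => rw [Matrix.matrix_eq_sum_single M]
  rw [map_sum]
  refine Finset.sum_congr rfl (fun i _ => ?_)
  rw [map_sum, Finset.sum_eq_single i]
  · have : Matrix.single i i (M i i) = M i i • Matrix.single i i (1:ℝ) := by
      rw [Matrix.smul_single, smul_eq_mul, mul_one]
    rw [this, _root_.map_smul]
  · intro b _ hb
    have : Matrix.single i b (M i b) = M i b • Matrix.single i b (1:ℝ) := by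
      rw [Matrix.smul_single, smul_eq_mul, mul_one]
    rw [this, _root_.map_smul, aux_offdiag_zero U hUdiag P hPmem hPorth (fun h => hb h.symm), smul_zero]
  · intro h; exact absurd (Finset.mem_univ i) h

end LA

section LA2

variable {m d : ℕ} (U : Submodule ℝ (Matrix (Fin m) (Fin m) ℝ))
  (hUdiag : ∀ M ∈ U, M.IsDiag)
  (P : Matrix (Fin m) (Fin m) ℝ →ₗ[ℝ] Matrix (Fin m) (Fin m) ℝ)
  (hPmem : ∀ M, P M ∈ U)
  (hPfix : ∀ M ∈ U, P M = M)
  (hPorth : ∀ M, ∀ R ∈ U, Matrix.trace ((M - P M)ᵀ * R) = 0)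

lemma aux_repr (M : Matrix (Fin m) (Fin m) ℝ) (q : Fin m × Fin m) :
    (Matrix.stdBasis ℝ (Fin m) (Fin m)).repr M q = M q.1 q.2 := by
  classical
  have hM : M = ∑ p : Fin m × Fin m, M p.1 p.2 • Matrix.stdBasis ℝ (Fin m) (Fin m) p := by
    ext a b
    rw [Matrix.sum_apply]
    rw [Finset.sum_eq_single (a, b)]
    · simp [Matrix.stdBasis_eq_single, Matrix.single]
    · rintro ⟨pi, pj⟩ _ hp
      simp only [Matrix.smul_apply, Matrix.stdBasis_eq_single, Matrix.single,
        Matrix.of_apply, smul_eq_mul]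
      rw [if_neg, mul_zero]
      intro hc
      exact hp (Prod.ext hc.1 hc.2)
    · intro h; exact absurd (Finset.mem_univ _) h
  conv_lhs => rw [hM]
  rw [map_sum]
  rw [Finsupp.finset_sum_apply]
  rw [Finset.sum_eq_single q]
  · rw [_root_.map_smul, Module.Basis.repr_self]
    simp
  · intro p _ hp
    rw [_root_.map_smul, Module.Basis.repr_self]
    simp [Finsupp.single_apply, hp]
  · intro h; exact absurd (Finset.mem_univ _) h

include hUdiag hPmem hPfix hPorth in
lemma aux_kappa_sum (hUdim : Module.finrank ℝ U = d) :
    ∑ j, P (Matrix.single j j 1) j j = (d : ℝ) := by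
  classical
  have hproj : LinearMap.IsProj U P := ⟨hPmem, hPfix⟩
  have htr : LinearMap.trace ℝ _ P = (Module.finrank ℝ U : ℝ) := hproj.trace
  rw [hUdim] at htr
  rw [LinearMap.trace_eq_matrix_trace ℝ (Matrix.stdBasis ℝ (Fin m) (Fin m))] at htr
  rw [Matrix.trace] at htr
  have hdiag : ∀ q : Fin m × Fin m,
      (LinearMap.toMatrix (Matrix.stdBasis ℝ (Fin m) (Fin m))
        (Matrix.stdBasis ℝ (Fin m) (Fin m)) P).diag q
      = P (Matrix.single q.1 q.2 1) q.1 q.2 := by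
    intro q
    rw [Matrix.diag, LinearMap.toMatrix_apply, aux_repr, Matrix.stdBasis_eq_single]
  rw [Finset.sum_congr rfl (fun q _ => hdiag q)] at htr
  rw [← htr, Fintype.sum_prod_type]
  refine Finset.sum_congr rfl (fun j _ => ?_)
  rw [Finset.sum_eq_single j]
  · intro b _ hb
    rw [aux_offdiag_zero U hUdiag P hPmem hPorth (fun h => hb h.symm)]
    simp
  · intro h; exact absurd (Finset.mem_univ _) h

include hPmem hPorth in
lemma aux_kappa_nonneg (l : Fin m) : 0 ≤ P (Matrix.single l l 1) l l := by
  set R := P (Matrix.single l l 1) with hRdef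
  have h1 : Matrix.trace ((Matrix.single l l 1)ᵀ * R) = Matrix.trace (Rᵀ * R) :=
    aux_inner_proj U P hPorth _ R (hPmem _)
  have h2 : Matrix.trace ((Matrix.single l l 1)ᵀ * R) = R l l := by
    rw [aux_frob]
    rw [Finset.sum_eq_single l]
    · rw [Finset.sum_eq_single l]
      · simp [Matrix.single]
      · intro b _ hb; simp [Matrix.single, hb.symm]
      · intro h; exact absurd (Finset.mem_univ _) h
    · intro a _ ha
      apply Finset.sum_eq_zero
      intro b _; simp [Matrix.single, ha.symm]
    · intro h; exact absurd (Finset.mem_univ _) h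
  have h3 : 0 ≤ Matrix.trace (Rᵀ * R) := by
    rw [aux_frob]
    exact Finset.sum_nonneg fun a _ => Finset.sum_nonneg fun b _ => mul_self_nonneg _
  rw [← h1, h2] at h3
  exact h3

end LA2


end Helpers

set_option maxHeartbeats 1000000 in
/-- Expectation bound for the Frobenius norm of the projection of `√D (S - I)` onto a
`d`-dimensional subspace `U` of diagonal matrices, where `S` is the empirical covariance
matrix of `n` i.i.d. standard Gaussian vectors in `ℝ^m`:
`𝔼‖Π_U(√D (S - I))‖_F ≤ √(2 d φ_max(D) / n)`, with `φ_max(D)` the largest diagonal entry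
of `D`.  The orthogonal projection `Π_U` (w.r.t. the Frobenius inner product) is encoded as
a linear map `P` fixing `U`, with range in `U`, and with `M - P M` Frobenius-orthogonal to
`U` for every `M`. -/
theorem stmt_18 (m n d : ℕ) (hm : 0 < m) (hn : 0 < n) (hd : 0 < d) (hdm : d ≤ m)
    (Ω : Type) [MeasureSpace Ω] [IsProbabilityMeasure (ℙ : Measure Ω)]
    (Y : Fin n → Ω → Fin m → ℝ)
    (hmeas : ∀ k i, Measurable fun ω => Y k ω i)
    (hindep : iIndepFun (fun (q : Fin n × Fin m) ω => Y q.1 ω q.2) ℙ)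
    (hgauss : ∀ k i, Measure.map (fun ω => Y k ω i) ℙ = gaussianReal 0 1)
    (S : Ω → Matrix (Fin m) (Fin m) ℝ)
    (hS : ∀ ω, S ω = (n : ℝ)⁻¹ • ∑ k, Matrix.of fun i j => Y k ω i * Y k ω j)
    (D : Matrix (Fin m) (Fin m) ℝ) (hDdiag : D.IsDiag) (hDnn : ∀ i, 0 ≤ D i i)
    (U : Submodule ℝ (Matrix (Fin m) (Fin m) ℝ))
    (hUdiag : ∀ M ∈ U, M.IsDiag)
    (hUdim : Module.finrank ℝ U = d)
    (P : Matrix (Fin m) (Fin m) ℝ →ₗ[ℝ] Matrix (Fin m) (Fin m) ℝ)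
    (hPmem : ∀ M, P M ∈ U)
    (hPfix : ∀ M ∈ U, P M = M)
    (hPorth : ∀ M, ∀ R ∈ U, Matrix.trace ((M - P M)ᵀ * R) = 0)
    (sqrtD : Matrix (Fin m) (Fin m) ℝ)
    (hsqrtD : sqrtD = Matrix.of fun i j => Real.sqrt (D i j))
    (Z : Ω → ℝ)
    (hZ : ∀ ω, Z ω = Real.sqrt (Matrix.trace
      ((P (sqrtD * (S ω - 1)))ᵀ * P (sqrtD * (S ω - 1))))) :
    ∫ ω, Z ω ≤ Real.sqrt (2 * d * (⨆ i, D i i) / n) := by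
  classical
  have hn0 : (n : ℝ) ≠ 0 := Nat.cast_ne_zero.2 hn.ne'
  haveI : Nonempty (Fin m) := ⟨⟨0, hm⟩⟩
  -- the elementary random variables
  set W : Fin n × Fin m → Ω → ℝ := fun q ω => Y q.1 ω q.2 ^ 2 - 1 with hWdef
  have hWmeas : ∀ q, Measurable (W q) := fun q =>
    ((hmeas q.1 q.2).pow_const 2).sub measurable_const
  have hTmeas : Measurable (fun x : ℝ => x ^ 2 - 1) :=
    (measurable_id.pow_const 2).sub measurable_const
  have hTTmeas : Measurable (fun x : ℝ => (x ^ 2 - 1) * (x ^ 2 - 1)) := hTmeas.mul hTmeas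
  have hWint : ∀ q, Integrable (W q) ℙ := fun q =>
    aux_transfer_int (hmeas q.1 q.2) (hgauss q.1 q.2) hTmeas aux_T_int
  have hWE : ∀ q, ∫ ω, W q ω = 0 := fun q => by
    have h := aux_transfer_eq (hmeas q.1 q.2) (hgauss q.1 q.2)
      (f := fun x : ℝ => x ^ 2 - 1) hTmeas
    rw [aux_T_integral] at h
    exact h
  have hWsqint : ∀ q, Integrable (fun ω => W q ω * W q ω) ℙ := fun q =>
    aux_transfer_int (hmeas q.1 q.2) (hgauss q.1 q.2) hTTmeas aux_Tsq_int
  have hWsqE : ∀ q, ∫ ω, W q ω * W q ω = 2 := fun q => by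
    have h := aux_transfer_eq (hmeas q.1 q.2) (hgauss q.1 q.2)
      (f := fun x : ℝ => (x ^ 2 - 1) * (x ^ 2 - 1)) hTTmeas
    rw [aux_Tsq_integral] at h
    exact h
  have hWindep : ∀ q q', q ≠ q' → IndepFun (W q) (W q') ℙ := fun q q' hqq' =>
    (hindep.indepFun hqq').comp hTmeas hTmeas
  have hWWint : ∀ q q', Integrable (fun ω => W q ω * W q' ω) ℙ := by
    intro q q'
    by_cases hqq' : q = q'
    · subst hqq'; exact hWsqint q
    · exact (hWindep q q' hqq').integrable_mul (hWint q) (hWint q')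
  have hWWE : ∀ q q', ∫ ω, W q ω * W q' ω = if q = q' then 2 else 0 := by
    intro q q'
    by_cases hqq' : q = q'
    · subst hqq'; rw [if_pos rfl]; exact hWsqE q
    · rw [if_neg hqq']
      have h := (hWindep q q' hqq').integral_mul_eq_mul_integral (hWmeas q).aestronglyMeasurable
        (hWmeas q').aestronglyMeasurable
      have h2 : ∫ ω, W q ω * W q' ω = (∫ ω, W q ω) * ∫ ω, W q' ω := h
      rw [h2, hWE q, hWE q']
      ring
  -- the diagonal coefficients
  set c : Fin m → Ω → ℝ := fun j ω => Real.sqrt (D j j) * (S ω j j - 1) with hcdef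
  have hc_sum : ∀ j ω, c j ω = Real.sqrt (D j j) * ((n:ℝ)⁻¹ * ∑ k, W (k, j) ω) := by
    intro j ω
    have hSjj : S ω j j = (n:ℝ)⁻¹ * ∑ k, Y k ω j * Y k ω j := by
      rw [hS ω]
      simp [Matrix.smul_apply, Matrix.sum_apply, smul_eq_mul]
    have hsum : ∑ k, W (k, j) ω = (∑ k, Y k ω j * Y k ω j) - n := by
      rw [hWdef]
      simp only
      rw [Finset.sum_sub_distrib]
      simp [pow_two]
    simp only [hcdef, hSjj, hsum]
    congr 1
    rw [mul_sub, inv_mul_cancel₀ hn0]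
  have hcmeas : ∀ j, Measurable (c j) := by
    intro j
    have : c j = fun ω => Real.sqrt (D j j) * ((n:ℝ)⁻¹ * ∑ k, W (k, j) ω) :=
      funext (hc_sum j)
    rw [this]
    exact measurable_const.mul (measurable_const.mul
      (Finset.measurable_sum _ fun k _ => hWmeas (k, j)))
  have hprod : ∀ j l ω, c j ω * c l ω
      = (Real.sqrt (D j j) * Real.sqrt (D l l) * ((n:ℝ)⁻¹ * (n:ℝ)⁻¹))
        * ∑ k, ∑ k', W (k, j) ω * W (k', l) ω := by
    intro j l ω
    rw [hc_sum j ω, hc_sum l ω, ← Finset.sum_mul_sum]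
    ring
  have hccint : ∀ j l, Integrable (fun ω => c j ω * c l ω) ℙ := by
    intro j l
    refine (Integrable.const_mul ?_ _).congr (ae_of_all _ fun ω => (hprod j l ω).symm)
    exact integrable_finset_sum _ fun k _ => integrable_finset_sum _ fun k' _ =>
      hWWint (k, j) (k', l)
  have hccE : ∀ j l, ∫ ω, c j ω * c l ω = if j = l then 2 * D j j / n else 0 := by
    intro j l
    have h1 : ∫ ω, c j ω * c l ω
        = (Real.sqrt (D j j) * Real.sqrt (D l l) * ((n:ℝ)⁻¹ * (n:ℝ)⁻¹))
          * ∑ k, ∑ k', ∫ ω, W (k, j) ω * W (k', l) ω := by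
      rw [integral_congr_ae (ae_of_all _ (hprod j l)), integral_const_mul]
      congr 1
      rw [integral_finset_sum _ fun k _ => integrable_finset_sum _ fun k' _ =>
        hWWint (k, j) (k', l)]
      exact Finset.sum_congr rfl fun k _ =>
        integral_finset_sum _ fun k' _ => hWWint (k, j) (k', l)
    rw [h1]
    by_cases hjl : j = l
    · subst hjl
      rw [if_pos rfl]
      have h2 : ∀ k k' : Fin n, ∫ ω, W (k, j) ω * W (k', j) ω
          = if k = k' then (2:ℝ) else 0 := by
        intro k k'
        rw [hWWE (k, j) (k', j)]
        simp [Prod.ext_iff]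
      rw [Finset.sum_congr rfl fun k _ => Finset.sum_congr rfl fun k' _ => h2 k k']
      have h3 : ∑ k : Fin n, ∑ k' : Fin n, (if k = k' then (2:ℝ) else 0) = n * 2 := by
        simp [Finset.sum_ite_eq]
      rw [h3, Real.mul_self_sqrt (hDnn j)]
      field_simp
    · rw [if_neg hjl]
      have h2 : ∀ k k' : Fin n, ∫ ω, W (k, j) ω * W (k', l) ω = 0 := by
        intro k k'
        rw [hWWE (k, j) (k', l), if_neg]
        intro hc
        exact hjl (congrArg Prod.snd hc)
      rw [Finset.sum_congr rfl fun k _ => Finset.sum_congr rfl fun k' _ => h2 k k']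
      simp
  -- the kernel of the projection on diagonal entries
  set κ : Fin m → Fin m → ℝ := fun j l => P (Matrix.single l l 1) j j with hκdef
  set Q : Ω → ℝ := fun ω => ∑ j, ∑ l, (c j ω * c l ω) * κ j l with hQdef
  have hQrepr : ∀ ω, Matrix.trace
      ((P (sqrtD * (S ω - 1)))ᵀ * P (sqrtD * (S ω - 1))) = Q ω := by
    intro ω
    set A : Matrix (Fin m) (Fin m) ℝ := sqrtD * (S ω - 1) with hAdef
    set B : Matrix (Fin m) (Fin m) ℝ := P A with hBdef2
    have hBdiag : B.IsDiag := hUdiag _ (hPmem _)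
    have hAdiagE : ∀ j, A j j = c j ω := by
      intro j
      rw [hAdef, Matrix.mul_apply]
      rw [Finset.sum_eq_single j]
      · rw [hsqrtD]
        simp only [Matrix.of_apply, Matrix.sub_apply, Matrix.one_apply_eq]
        rfl
      · intro b _ hb
        rw [hsqrtD]
        simp only [Matrix.of_apply]
        rw [hDdiag (fun h : j = b => hb h.symm), Real.sqrt_zero, zero_mul]
      · intro h; exact absurd (Finset.mem_univ _) h
    have hBdec : B = ∑ l, A l l • P (Matrix.single l l 1) :=
      aux_P_decomp U hUdiag P hPmem hPorth A
    have hBentry : ∀ j, B j j = ∑ l, A l l * κ j l := by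
      intro j
      rw [hBdec, Matrix.sum_apply]
      exact Finset.sum_congr rfl fun l _ => by rw [Matrix.smul_apply, smul_eq_mul]
    have htr1 : Matrix.trace (Aᵀ * B) = Matrix.trace (Bᵀ * B) :=
      aux_inner_proj U P hPorth A B (hPmem A)
    have htr2 : Matrix.trace (Aᵀ * B) = ∑ j, A j j * B j j := by
      rw [aux_frob]
      refine Finset.sum_congr rfl fun j _ => ?_
      rw [Finset.sum_eq_single j]
      · intro b _ hb
        rw [hBdiag (fun h => hb h.symm), mul_zero]
      · intro h; exact absurd (Finset.mem_univ _) h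
    rw [← htr1, htr2, hQdef]
    simp only
    refine Finset.sum_congr rfl fun j _ => ?_
    rw [hBentry j, Finset.mul_sum]
    refine Finset.sum_congr rfl fun l _ => ?_
    rw [hAdiagE j, hAdiagE l]
    ring
  have hQnn : ∀ ω, 0 ≤ Q ω := by
    intro ω
    rw [← hQrepr ω, aux_frob]
    exact Finset.sum_nonneg fun a _ => Finset.sum_nonneg fun b _ => mul_self_nonneg _
  -- expectation of Q
  set φ : ℝ := ⨆ i, D i i with hφdef
  have hφle : ∀ j, D j j ≤ φ :=
    fun j => le_ciSup (f := fun i => D i i) (Set.Finite.bddAbove (Set.finite_range _)) j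
  have hφ0 : 0 ≤ φ := le_trans (hDnn ⟨0, hm⟩) (hφle ⟨0, hm⟩)
  have hQmeas : Measurable Q :=
    Finset.measurable_sum _ fun j _ => Finset.measurable_sum _ fun l _ =>
      ((hcmeas j).mul (hcmeas l)).mul_const _
  have hQint : Integrable Q ℙ :=
    integrable_finset_sum _ fun j _ => integrable_finset_sum _ fun l _ =>
      (hccint j l).mul_const _
  have hκnn : ∀ l, 0 ≤ κ l l := fun l => aux_kappa_nonneg U P hPmem hPorth l
  have hκsum : ∑ j, κ j j = (d : ℝ) :=
    aux_kappa_sum U hUdiag P hPmem hPfix hPorth hUdim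
  have hEQ : ∫ ω, Q ω = ∑ j, (2 * D j j / n) * κ j j := by
    rw [hQdef]
    simp only
    rw [integral_finset_sum _ fun j _ => integrable_finset_sum _ fun l _ =>
      (hccint j l).mul_const _]
    refine Finset.sum_congr rfl fun j _ => ?_
    rw [integral_finset_sum _ fun l _ => (hccint j l).mul_const _]
    rw [Finset.sum_eq_single j]
    · rw [integral_mul_const, hccE j j, if_pos rfl]
    · intro l _ hl
      rw [integral_mul_const, hccE j l, if_neg (fun h => hl h.symm), zero_mul]
    · intro h; exact absurd (Finset.mem_univ _) h
  have hEQle : ∫ ω, Q ω ≤ 2 * d * φ / n := by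
    rw [hEQ]
    have hstep : ∑ j, (2 * D j j / n) * κ j j ≤ ∑ j, (2 * φ / n) * κ j j := by
      refine Finset.sum_le_sum fun j _ => ?_
      refine mul_le_mul_of_nonneg_right ?_ (hκnn j)
      gcongr
      exact hφle j
    calc ∑ j, (2 * D j j / n) * κ j j ≤ ∑ j, (2 * φ / n) * κ j j := hstep
    _ = (2 * φ / n) * ∑ j, κ j j := by rw [Finset.mul_sum]
    _ = 2 * d * φ / n := by rw [hκsum]; ring
  -- conclusion via Cauchy-Schwarz
  have hZQ : ∀ ω, Z ω = Real.sqrt (Q ω) := fun ω => by rw [hZ ω, hQrepr ω]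
  have hZfun : Z = fun ω => Real.sqrt (Q ω) := funext hZQ
  have hZmeas : Measurable Z := by
    rw [hZfun]; exact hQmeas.sqrt
  have hZsq : ∀ ω, Z ω ^ 2 = Q ω := fun ω => by
    rw [hZQ ω]; exact Real.sq_sqrt (hQnn ω)
  have hZsqint : Integrable (fun ω => Z ω ^ 2) ℙ :=
    hQint.congr (ae_of_all _ fun ω => (hZsq ω).symm)
  have hmem : MemLp Z 2 ℙ :=
    (memLp_two_iff_integrable_sq hZmeas.aestronglyMeasurable).2 hZsqint
  have hCS : (∫ ω, Z ω) ^ 2 ≤ ∫ ω, Z ω ^ 2 := by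
    have h0 := variance_nonneg Z ℙ
    rw [variance_eq_sub hmem] at h0
    have h1 : (ℙ : Measure Ω)[Z ^ 2] = ∫ ω, Z ω ^ 2 := rfl
    have h2 : (ℙ : Measure Ω)[Z] = ∫ ω, Z ω := rfl
    rw [h1, h2] at h0
    linarith
  have hZE0 : 0 ≤ ∫ ω, Z ω :=
    integral_nonneg fun ω => by rw [hZQ ω]; exact Real.sqrt_nonneg _
  have hfinal : (∫ ω, Z ω) ^ 2 ≤ 2 * d * φ / n := by
    refine le_trans hCS (le_trans ?_ hEQle)
    rw [integral_congr_ae (ae_of_all _ hZsq)]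
  calc ∫ ω, Z ω = Real.sqrt ((∫ ω, Z ω) ^ 2) := (Real.sqrt_sq hZE0).symm
  _ ≤ Real.sqrt (2 * d * φ / n) := Real.sqrt_le_sqrt hfinal
end

section
/- Let m, n, d be positive integers with d ≤ m, let Y_1, …, Y_n be i.i.d. standard Gaussian random vectors in ℝ^m, and set S = n⁻¹ Σ_{k=1}^n Y_k Y_kᵀ. Let U be a d-dimensional linear subspace of the space of diagonal m×m real matrices, and let B = { R ∈ U : ‖R‖_F ≤ 1 } be its Frobenius unit ball. Then 𝔼[ sup_{R∈B} tr( R (S − I_m) R ) ] ≤ √( 2d / n ). -/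
open MeasureTheory ProbabilityTheory Matrix

/-!
On the diagonal of `S - I` sit the variables `aᵢ = n⁻¹ ∑ₖ Yₖᵢ² - 1`, each with `𝔼[aᵢ²] = 2/n`
because `Var[X²] = 𝔼X⁴ - (𝔼X²)² = 2` for a standard Gaussian `X`. A diagonal `R ∈ B` with
diagonal `x` gives `tr(R (S - I) R) = ∑ᵢ xᵢ² aᵢ`, where `x` runs through the unit ball of a
subspace `V ⊆ ℝ^m` of dimension at most `d`. Cauchy–Schwarz and `xᵢ² ≤ cᵢ := ‖P_V eᵢ‖²` bound
this by `√(∑ᵢ cᵢ aᵢ²)` uniformly in `R`, and `∑ᵢ cᵢ = tr P_V = dim V ≤ d`. Jensen's inequality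
for the square root finishes: `𝔼√(∑ᵢ cᵢ aᵢ²) ≤ √(∑ᵢ cᵢ 2/n) ≤ √(2d/n)`.
-/

open Real
open scoped Nat RealInnerProductSpace

theorem integral_pow_even_gaussianReal (k : ℕ) :
    ∫ x, x ^ (2 * k) ∂gaussianReal 0 1 = ((2 * k - 1)‼ : ℝ) := by
  have hdensity : ∀ x : ℝ, gaussianPDFReal 0 1 x * x ^ (2 * k)
      = (√(2 * π))⁻¹ * (|x| ^ ((2 * k : ℕ) : ℝ) * exp (-(1 / 2) * |x| ^ (2 : ℝ))) := by
    intro x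
    rw [gaussianPDFReal, rpow_natCast, rpow_two, sq_abs, (even_two_mul k).pow_abs]
    simp only [NNReal.coe_one, mul_one, sub_zero]
    ring_nf
  have hscale : (1 / 2 : ℝ) ^ (-(((2 * k : ℕ) : ℝ) + 1) / 2) = 2 ^ k * √2 := by
    rw [one_div, inv_rpow (by norm_num), ← rpow_neg (by norm_num), sqrt_eq_rpow, ← rpow_natCast,
      ← rpow_add (by norm_num)]
    push_cast
    ring_nf
  rw [integral_gaussianReal_eq_integral_smul one_ne_zero]
  simp_rw [smul_eq_mul, hdensity]
  rw [integral_const_mul,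
    integral_comp_abs (f := fun y => y ^ ((2 * k : ℕ) : ℝ) * exp (-(1 / 2) * y ^ (2 : ℝ))),
    integral_rpow_mul_exp_neg_mul_rpow (by norm_num) (by linarith [(2 * k).cast_nonneg (α := ℝ)])
      (by norm_num), hscale,
    show (((2 * k : ℕ) : ℝ) + 1) / 2 = k + 1 / 2 by push_cast; ring, Gamma_nat_add_half,
    sqrt_mul (by norm_num)]
  field_simp

theorem integral_sq_gaussianReal : ∫ x, x ^ 2 ∂gaussianReal 0 1 = 1 := by
  simpa using integral_pow_even_gaussianReal 1

theorem memLp_sq_gaussianReal : MemLp (fun x : ℝ => x ^ 2) 2 (gaussianReal 0 1) := by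
  refine (memLp_two_iff_integrable_sq (by fun_prop)).2 ?_
  refine ((memLp_id_gaussianReal 4).integrable_norm_pow' (p := 4)).congr (ae_of_all _ fun x => ?_)
  simp [← pow_mul, Even.pow_abs ⟨2, rfl⟩]

theorem variance_sq_gaussianReal : Var[fun x : ℝ => x ^ 2; gaussianReal 0 1] = 2 := by
  rw [variance_eq_sub memLp_sq_gaussianReal]
  simp only [Pi.pow_apply, ← pow_mul, integral_sq_gaussianReal]
  rw [integral_pow_even_gaussianReal 2]
  norm_num [Nat.doubleFactorial]

theorem ProbabilityTheory.HasLaw.variance_comp {Ω 𝓧 : Type*} {mΩ : MeasurableSpace Ω}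
    {m𝓧 : MeasurableSpace 𝓧} {P : Measure Ω} {μ : Measure 𝓧} {X : Ω → 𝓧} (hX : HasLaw X μ P)
    {f : 𝓧 → ℝ} (hf : AEMeasurable f μ) : Var[f ∘ X; P] = Var[f; μ] := by
  have hfX : AEMeasurable (f ∘ X) P := (hX.map_eq ▸ hf).comp_aemeasurable hX.aemeasurable
  rw [← covariance_self hfX, hX.covariance_comp hf hf, covariance_self hf]

section SampleMean

variable {Ω ι : Type*} {mΩ : MeasurableSpace Ω} {P : Measure Ω} [IsProbabilityMeasure P]
  [Fintype ι]

theorem integrable_and_integral_sq_mean_sq_sub_one_of_hasLaw_gaussianReal [Nonempty ι]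
    {X : ι → Ω → ℝ} (hX : ∀ k, HasLaw (X k) (gaussianReal 0 1) P)
    (hindep : Pairwise fun k l => X k ⟂ᵢ[P] X l) :
    Integrable (fun ω => ((Fintype.card ι : ℝ)⁻¹ * ∑ k, X k ω ^ 2 - 1) ^ 2) P ∧
      ∫ ω, ((Fintype.card ι : ℝ)⁻¹ * ∑ k, X k ω ^ 2 - 1) ^ 2 ∂P = 2 / (Fintype.card ι : ℝ) := by
  set N : ℝ := (Fintype.card ι : ℝ)
  have hsq : Measurable fun x : ℝ => x ^ 2 := by fun_prop
  have hmemLp : ∀ k, MemLp (fun ω => X k ω ^ 2) 2 P := fun k =>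
    ((hX k).map_eq ▸ memLp_sq_gaussianReal).comp_of_map (hX k).aemeasurable
  have hmean : ∀ k, ∫ ω, X k ω ^ 2 ∂P = 1 := fun k =>
    ((hX k).integral_comp hsq.aestronglyMeasurable).trans integral_sq_gaussianReal
  have hvar : ∀ k, Var[fun ω => X k ω ^ 2; P] = 2 := fun k =>
    ((hX k).variance_comp hsq.aemeasurable).trans variance_sq_gaussianReal
  set T : Ω → ℝ := fun ω => N⁻¹ * ∑ k, X k ω ^ 2
  have hT : MemLp T 2 P := (memLp_finsetSum _ fun k _ => hmemLp k).const_mul _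
  have hmeanT : ∫ ω, T ω ∂P = 1 := by
    have hN : N ≠ 0 := by positivity
    simp only [T, integral_const_mul,
      integral_finsetSum _ fun k _ => (hmemLp k).integrable one_le_two, hmean]
    simp [N, hN]
  have hvarT : Var[T; P] = 2 / N := by
    have hsum : Var[fun ω => ∑ k, X k ω ^ 2; P] = 2 * N := by
      simpa [Finset.sum_fn, hvar, N, mul_comm] using
        IndepFun.variance_sum (s := Finset.univ) (fun k _ => hmemLp k)
          fun k _ l _ hkl => (hindep hkl).comp hsq hsq
    simp only [T, variance_const_mul, hsum]
    field_simp
  refine ⟨(hT.sub (memLp_const 1)).integrable_sq, ?_⟩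
  rw [← hvarT, variance_eq_integral hT.aemeasurable, hmeanT]

end SampleMean

section Leverage

variable {ι E : Type*} [Fintype ι] [NormedAddCommGroup E] [InnerProductSpace ℝ E]

theorem OrthonormalBasis.sum_norm_sq_starProjection [FiniteDimensional ℝ E]
    (b : OrthonormalBasis ι ℝ E) (K : Submodule ℝ E) :
    ∑ i, ‖K.starProjection (b i)‖ ^ 2 = Module.finrank ℝ K := by
  have hproj : LinearMap.IsProj K (K.starProjection : E →ₗ[ℝ] E) :=
    ⟨K.starProjection_apply_mem, fun x hx => K.starProjection_eq_self_iff.2 hx⟩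
  rw [← hproj.trace, LinearMap.trace_eq_sum_inner _ b]
  refine Finset.sum_congr rfl fun i _ => ?_
  calc ‖K.starProjection (b i)‖ ^ 2
      = ⟪K.starProjection (b i), K.starProjection (b i)⟫ := (real_inner_self_eq_norm_sq _).symm
    _ = ⟪b i, K.starProjection (b i)⟫ := by
      rw [K.inner_starProjection_left_eq_right,
        K.starProjection_eq_self_iff.2 (K.starProjection_apply_mem _)]

theorem inner_sq_le_norm_sq_starProjection_mul (K : Submodule ℝ E) [K.HasOrthogonalProjection]
    (v : E) {x : E} (hx : x ∈ K) : ⟪v, x⟫ ^ 2 ≤ ‖K.starProjection v‖ ^ 2 * ‖x‖ ^ 2 := by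
  rw [← K.starProjection_eq_self_iff.2 hx, ← K.inner_starProjection_left_eq_right,
    K.starProjection_eq_self_iff.2 hx, ← mul_pow]
  exact pow_le_pow_left₀ (abs_nonneg _) (abs_real_inner_le_norm _ _) 2 |>.trans' (sq_abs _).ge

theorem OrthonormalBasis.sum_inner_sq_mul_le_sqrt (b : OrthonormalBasis ι ℝ E)
    (K : Submodule ℝ E) [K.HasOrthogonalProjection] {x : E} (hx : x ∈ K) (hx1 : ‖x‖ ≤ 1)
    (a : ι → ℝ) :
    ∑ i, ⟪b i, x⟫ ^ 2 * a i ≤ √(∑ i, ‖K.starProjection (b i)‖ ^ 2 * a i ^ 2) := by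
  have hnorm : ∑ i, ⟪b i, x⟫ ^ 2 ≤ 1 := by
    rw [b.sum_sq_inner_right]
    nlinarith [norm_nonneg x]
  have hcoord : ∀ i, ⟪b i, x⟫ ^ 2 ≤ ‖K.starProjection (b i)‖ ^ 2 := fun i =>
    (inner_sq_le_norm_sq_starProjection_mul K (b i) hx).trans
      (mul_le_of_le_one_right (sq_nonneg _) (by nlinarith [norm_nonneg x]))
  have hsq : (∑ i, ⟪b i, x⟫ ^ 2 * a i) ^ 2 ≤ ∑ i, ‖K.starProjection (b i)‖ ^ 2 * a i ^ 2 :=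
    calc (∑ i, ⟪b i, x⟫ ^ 2 * a i) ^ 2
        = (∑ i, ⟪b i, x⟫ * (⟪b i, x⟫ * a i)) ^ 2 := by simp only [sq, mul_assoc]
      _ ≤ (∑ i, ⟪b i, x⟫ ^ 2) * ∑ i, (⟪b i, x⟫ * a i) ^ 2 :=
        Finset.sum_mul_sq_le_sq_mul_sq _ _ _
      _ ≤ 1 * ∑ i, ‖K.starProjection (b i)‖ ^ 2 * a i ^ 2 := by
        refine mul_le_mul hnorm (Finset.sum_le_sum fun i _ => ?_)
          (Finset.sum_nonneg fun i _ => sq_nonneg _) zero_le_one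
        rw [mul_pow]
        exact mul_le_mul_of_nonneg_right (hcoord i) (sq_nonneg _)
      _ = _ := one_mul _
  exact (le_abs_self _).trans (Real.abs_le_sqrt hsq)

end Leverage

section Integral

variable {α : Type*} {mα : MeasurableSpace α} {μ : Measure α}

theorem MeasureTheory.Integrable.sqrt [IsFiniteMeasure μ] {f : α → ℝ} (hf : Integrable f μ) :
    Integrable (fun x => √(f x)) μ :=
  ((memLp_two_iff_integrable_sq (continuous_sqrt.comp_aestronglyMeasurable hf.1)).2
    (hf.pos_part.congr (ae_of_all _ fun _ => Real.sq_sqrt'.symm))).integrable one_le_two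

theorem integral_sqrt_le_sqrt_integral [IsProbabilityMeasure μ] {f : α → ℝ}
    (hf0 : 0 ≤ᵐ[μ] f) (hf : Integrable f μ) : ∫ x, √(f x) ∂μ ≤ √(∫ x, f x ∂μ) :=
  strictConcaveOn_sqrt.concaveOn.le_map_integral continuous_sqrt.continuousOn isClosed_Ici hf0 hf
    hf.sqrt

theorem integral_iSup_le_of_forall_le {ι : Type*} {F : ι → α → ℝ} {g : α → ℝ} (i₀ : ι)
    (hF₀ : ∀ x, 0 ≤ F i₀ x) (hF : ∀ i x, F i x ≤ g x) (hg : Integrable g μ) :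
    ∫ x, ⨆ i, F i x ∂μ ≤ ∫ x, g x ∂μ := by
  have : Nonempty ι := ⟨i₀⟩
  refine integral_mono_of_nonneg (ae_of_all _ fun x => ?_) hg (ae_of_all _ fun x => ?_)
  · exact (hF₀ x).trans (le_ciSup ⟨g x, Set.forall_mem_range.2 (hF · x)⟩ i₀)
  · exact ciSup_le (hF · x)

end Integral

theorem Matrix.IsDiag.trace_mul_mul_self {n : Type*} [Fintype n] [DecidableEq n]
    {R : Matrix n n ℝ} (hR : R.IsDiag) (M : Matrix n n ℝ) :
    trace (R * M * R) = ∑ i, R i i ^ 2 * M i i := by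
  rw [← hR.diagonal_diag]
  simp only [trace, diag, diagonal_mul, mul_diagonal, diagonal_apply_eq]
  exact Finset.sum_congr rfl fun i _ => by ring

theorem Matrix.IsDiag.trace_transpose_mul_self {n : Type*} [Fintype n] [DecidableEq n]
    {R : Matrix n n ℝ} (hR : R.IsDiag) : trace (Rᵀ * R) = ∑ i, R i i ^ 2 := by
  rw [hR.isSymm.eq]
  simpa using hR.trace_mul_mul_self 1

def Matrix.diagEuclidean (n : Type*) [Fintype n] :
    Matrix n n ℝ →ₗ[ℝ] EuclideanSpace ℝ n :=
  (WithLp.linearEquiv 2 ℝ (n → ℝ)).symm.toLinearMap ∘ₗ diagLinearMap n ℝ ℝ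

theorem Matrix.IsDiag.trace_mul_mul_self_le_sqrt {n : Type*} [Fintype n] [DecidableEq n]
    {U : Submodule ℝ (Matrix n n ℝ)} {R : Matrix n n ℝ} (hR : R.IsDiag) (hRU : R ∈ U)
    (hR1 : √(trace (Rᵀ * R)) ≤ 1) (M : Matrix n n ℝ) :
    trace (R * M * R) ≤ √(∑ i, ‖(U.map (diagEuclidean n)).starProjection
      (EuclideanSpace.basisFun n ℝ i)‖ ^ 2 * M i i ^ 2) := by
  have hnorm : ‖diagEuclidean n R‖ ≤ 1 := by
    simpa [EuclideanSpace.norm_eq, hR.trace_transpose_mul_self, diagEuclidean] using hR1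
  convert (EuclideanSpace.basisFun n ℝ).sum_inner_sq_mul_le_sqrt _
    (Submodule.mem_map_of_mem hRU) hnorm (fun i => M i i) using 1
  simp only [EuclideanSpace.basisFun_inner]
  simp [hR.trace_mul_mul_self, diagEuclidean]

theorem stmt_19_general (m n d : ℕ) (hn : 0 < n)
    (Ω : Type) [MeasureSpace Ω] [IsProbabilityMeasure (ℙ : Measure Ω)]
    (Y : Fin n → Ω → Fin m → ℝ)
    (hmeas : ∀ k i, Measurable fun ω => Y k ω i)
    (hindep : iIndepFun (fun (q : Fin n × Fin m) ω => Y q.1 ω q.2) ℙ)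
    (hgauss : ∀ k i, Measure.map (fun ω => Y k ω i) ℙ = gaussianReal 0 1)
    (S : Ω → Matrix (Fin m) (Fin m) ℝ)
    (hS : ∀ ω, S ω = (n : ℝ)⁻¹ • ∑ k, Matrix.of fun i j => Y k ω i * Y k ω j)
    (U : Submodule ℝ (Matrix (Fin m) (Fin m) ℝ))
    (hUdiag : ∀ M ∈ U, M.IsDiag)
    (hUdim : Module.finrank ℝ U = d) :
    (∫ ω, ⨆ R : {R : Matrix (Fin m) (Fin m) ℝ //
        R ∈ U ∧ Real.sqrt (Matrix.trace (Rᵀ * R)) ≤ 1},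
      Matrix.trace (R.1 * (S ω - 1) * R.1)) ≤ Real.sqrt (2 * d / n) := by
  set a : Fin m → Ω → ℝ := fun i ω => (n : ℝ)⁻¹ * ∑ k, Y k ω i ^ 2 - 1
  have ha : ∀ i, Integrable (fun ω => a i ω ^ 2) ∧ ∫ ω, a i ω ^ 2 = 2 / n := fun i => by
    have : Nonempty (Fin n) := ⟨⟨0, hn⟩⟩
    simpa using integrable_and_integral_sq_mean_sq_sub_one_of_hasLaw_gaussianReal
      (X := fun k ω => Y k ω i) (fun k => ⟨(hmeas k i).aemeasurable, hgauss k i⟩)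
      fun k l hkl => hindep.indepFun (i := (k, i)) (j := (l, i)) fun h => hkl (congrArg Prod.fst h)
  let V := U.map (diagEuclidean (Fin m))
  set c : Fin m → ℝ := fun i => ‖V.starProjection (EuclideanSpace.basisFun (Fin m) ℝ i)‖ ^ 2
  have hc : ∑ i, c i ≤ d := by
    rw [OrthonormalBasis.sum_norm_sq_starProjection, ← hUdim]
    exact_mod_cast Submodule.finrank_map_le _ U
  have hbound : ∀ (R : {R : Matrix (Fin m) (Fin m) ℝ //
      R ∈ U ∧ Real.sqrt (Matrix.trace (Rᵀ * R)) ≤ 1}) ω,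
      Matrix.trace (R.1 * (S ω - 1) * R.1) ≤ √(∑ i, c i * a i ω ^ 2) := fun R ω => by
    have hdiag : ∀ i, (S ω - 1) i i = a i ω := by simp [hS, a, Matrix.sum_apply, sq]
    simpa only [hdiag] using
      (hUdiag R.1 R.2.1).trace_mul_mul_self_le_sqrt R.2.1 R.2.2 (S ω - 1)
  have hint : Integrable (fun ω => ∑ i, c i * a i ω ^ 2) :=
    integrable_finsetSum _ fun i _ => (ha i).1.const_mul (c i)
  calc _ ≤ ∫ ω, √(∑ i, c i * a i ω ^ 2) :=
        integral_iSup_le_of_forall_le ⟨0, U.zero_mem, by simp⟩ (fun ω => by simp) hbound hint.sqrt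
    _ ≤ √(∫ ω, ∑ i, c i * a i ω ^ 2) :=
        integral_sqrt_le_sqrt_integral (ae_of_all _ fun ω => by positivity) hint
    _ = √((∑ i, c i) * (2 / n)) := by
        rw [integral_finsetSum _ fun i _ => (ha i).1.const_mul (c i), Finset.sum_mul]
        simp only [integral_const_mul, (ha _).2]
    _ ≤ √(2 * d / n) := by
        gcongr
        rw [mul_div_assoc', mul_comm]
        gcongr

/-- Expectation bound for the supremum of `tr(R (S - I) R)` over the Frobenius unit ball
`B` of a `d`-dimensional subspace `U` of diagonal matrices, where `S` is the empirical
covariance matrix of `n` i.i.d. standard Gaussian vectors in `ℝ^m`: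
`𝔼[sup_{R ∈ B} tr(R (S - I) R)] ≤ √(2d/n)`. -/
theorem stmt_19 (m n d : ℕ) (hm : 0 < m) (hn : 0 < n) (hd : 0 < d) (hdm : d ≤ m)
    (Ω : Type) [MeasureSpace Ω] [IsProbabilityMeasure (ℙ : Measure Ω)]
    (Y : Fin n → Ω → Fin m → ℝ)
    (hmeas : ∀ k i, Measurable fun ω => Y k ω i)
    (hindep : iIndepFun (fun (q : Fin n × Fin m) ω => Y q.1 ω q.2) ℙ)
    (hgauss : ∀ k i, Measure.map (fun ω => Y k ω i) ℙ = gaussianReal 0 1)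
    (S : Ω → Matrix (Fin m) (Fin m) ℝ)
    (hS : ∀ ω, S ω = (n : ℝ)⁻¹ • ∑ k, Matrix.of fun i j => Y k ω i * Y k ω j)
    (U : Submodule ℝ (Matrix (Fin m) (Fin m) ℝ))
    (hUdiag : ∀ M ∈ U, M.IsDiag)
    (hUdim : Module.finrank ℝ U = d) :
    (∫ ω, ⨆ R : {R : Matrix (Fin m) (Fin m) ℝ //
        R ∈ U ∧ Real.sqrt (Matrix.trace (Rᵀ * R)) ≤ 1},
      Matrix.trace (R.1 * (S ω - 1) * R.1)) ≤ Real.sqrt (2 * d / n) :=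
  stmt_19_general m n d hn Ω Y hmeas hindep hgauss S hS U hUdiag hUdim
end
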